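/- arXiv:math/0305135 — 10 statements merged into one kernel-verified Lean document; each statement's English description precedes it below -/
import Mathlib

section
/- Let q ≥ 2 be a prime power and let n, k, d be positive integers with k < n. If ∑_{l=0}^{k-1} ⌈d/q^l⌉ ≤ n, then d ≤ ⌊ n·q^{k-1}·(q-1) / (q^k - 1) ⌋. (In other words, the Griesmer bound for linear block codes implies the Plotkin bound.) -/
/-! Dropping the ceilings bounds the Griesmer sum below by the geometric sum
`d · ∑_{l<k} q^{-l} = d (q^k - 1) / (q^{k-1} (q - 1))`, so `d (q^k - 1) ≤ n q^{k-1} (q - 1)`;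
as `d` is an integer, it is then at most the floor of the quotient. -/

open Finset

theorem sum_le_of_sum_ceil_le {ι K : Type*} [Ring K] [LinearOrder K] [IsStrictOrderedRing K]
    [FloorRing K] (s : Finset ι) (f : ι → K) {n : ℤ} (h : ∑ i ∈ s, ⌈f i⌉ ≤ n) :
    ∑ i ∈ s, f i ≤ n :=
  calc ∑ i ∈ s, f i ≤ ∑ i ∈ s, (⌈f i⌉ : K) := sum_le_sum fun i _ => Int.le_ceil (f i)
    _ = ((∑ i ∈ s, ⌈f i⌉ : ℤ) : K) := by push_cast; rfl
    _ ≤ n := by exact_mod_cast h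

theorem sum_range_div_pow_mul {K : Type*} [Field K] {q : K} (hq : q ≠ 0) (a : K) (m : ℕ) :
    (∑ l ∈ range (m + 1), a / q ^ l) * (q ^ m * (q - 1)) = a * (q ^ (m + 1) - 1) := by
  induction m with
  | zero => simp
  | succ m ih =>
    have hsplit : (∑ l ∈ range (m + 1), a / q ^ l) * (q ^ (m + 1) * (q - 1))
        = q * ((∑ l ∈ range (m + 1), a / q ^ l) * (q ^ m * (q - 1))) := by ring
    rw [sum_range_succ, add_mul, hsplit, ih]
    field_simp
    ring

theorem griesmer_implies_plotkin_general (q n k d : ℕ) (hq2 : 2 ≤ q)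
    (hk : 0 < k)
    (hgriesmer : ∑ l ∈ Finset.range k, ⌈(d : ℚ) / (q : ℚ) ^ l⌉ ≤ (n : ℤ)) :
    (d : ℤ) ≤ ⌊((n : ℚ) * (q : ℚ) ^ (k - 1) * ((q : ℚ) - 1)) / ((q : ℚ) ^ k - 1)⌋ := by
  obtain ⟨m, rfl⟩ : ∃ m, k = m + 1 := Nat.exists_eq_succ_of_ne_zero hk.ne'
  have hq : (1 : ℚ) < q := by exact_mod_cast hq2
  have hsum : ∑ l ∈ range (m + 1), (d : ℚ) / (q : ℚ) ^ l ≤ n :=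
    sum_le_of_sum_ceil_le _ _ hgriesmer
  have hplotkin : (d : ℚ) * ((q : ℚ) ^ (m + 1) - 1) ≤ n * ((q : ℚ) ^ m * ((q : ℚ) - 1)) := by
    rw [← sum_range_div_pow_mul (by positivity)]
    gcongr
  have hpow : (1 : ℚ) < (q : ℚ) ^ (m + 1) := one_lt_pow₀ hq (by omega)
  rw [Int.le_floor, Nat.add_sub_cancel, Int.cast_natCast, le_div_iff₀ (by linarith)]
  linarith

/-- **Griesmer bound implies Plotkin bound.**
Let `q ≥ 2` be a prime power and `n, k, d` positive integers with `k < n`.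
If `∑_{l=0}^{k-1} ⌈d/q^l⌉ ≤ n` (the Griesmer inequality), then
`d ≤ ⌊ n·q^{k-1}·(q-1) / (q^k - 1) ⌋` (the Plotkin bound). -/
theorem griesmer_implies_plotkin (q n k d : ℕ) (hq : IsPrimePow q) (hq2 : 2 ≤ q)
    (hn : 0 < n) (hk : 0 < k) (hd : 0 < d) (hkn : k < n)
    (hgriesmer : ∑ l ∈ Finset.range k, ⌈(d : ℚ) / (q : ℚ) ^ l⌉ ≤ (n : ℤ)) :
    (d : ℤ) ≤ ⌊((n : ℚ) * (q : ℚ) ^ (k - 1) * ((q : ℚ) - 1)) / ((q : ℚ) ^ k - 1)⌋ :=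
  griesmer_implies_plotkin_general q n k d hq2 hk hgriesmer
end

section
/- Griesmer bound for convolutional codes: Let F_q be a finite field with q elements, let G ∈ F_q[z]^{k×n} (1 ≤ k < n) be right invertible and minimal with row degrees ν_1,…,ν_k, complexity δ = ν_1 + … + ν_k, and memory m = max{ν_1,…,ν_k}, and let d = min{ wt(uG) : u ∈ F_q[z]^k, u ≠ 0 } be the free distance of the convolutional code generated by G. Then for every integer i with i ≥ 1 if km = δ, respectively i ≥ 0 if km > δ, one has ∑_{l=0}^{k(m+i)-δ-1} ⌈d/q^l⌉ ≤ n(m+i). -/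
/-!
Truncate the convolutional code to a block code. If `s r + ν r ≤ N`, the messages `u` with
`deg u_r < s r` form an `F`-space of dimension `∑ s r`, and their codewords `u G` have all entries of
degree `< N`. Recording the first `N` coefficients of each entry is injective on them (a right
inverse `H` recovers `u = (u G) H`) and preserves the weight, so it yields a linear block code of
length `n N`, dimension `∑ s r` and minimum distance at least `d`. With `N = m + i` and
`s r = m + i - ν r` the dimension is `k (m + i) - δ`, and the Griesmer bound for block codes
gives the claim. That bound is proved as usual by induction on the dimension: for a codeword `c`
of minimum weight, the residual code (the code restricted to the zero set of `c`) loses at most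
one dimension and has minimum distance at least `⌈wt c / q⌉`.
-/

open Polynomial Matrix

/-- The weight of a vector of polynomials: the total number of nonzero coefficients
occurring in its polynomial entries. -/
def polyWt {F : Type*} [Field F] {n : ℕ} (v : Fin n → Polynomial F) : ℕ :=
  ∑ j, (v j).support.card

/-- The complexity of a polynomial generator matrix `G ∈ F[z]^{k×n}`:
the maximal degree of its `k×k` minors. -/
noncomputable def complexity {F : Type*} [Field F] {k n : ℕ}
    (G : Matrix (Fin k) (Fin n) (Polynomial F)) : ℕ :=
  Finset.univ.sup fun f : Fin k ↪ Fin n => ((G.submatrix id ⇑f).det).natDegree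

/-- The `r`-th row degree of a polynomial matrix: the maximal degree of the
polynomial entries in row `r`. -/
noncomputable def rowDeg {F : Type*} [Field F] {k n : ℕ}
    (G : Matrix (Fin k) (Fin n) (Polynomial F)) (r : Fin k) : ℕ :=
  Finset.univ.sup fun j => (G r j).natDegree


open Finset Module

namespace Nat

theorem ceilDiv_ceilDiv {a b c : ℕ} (hb : 0 < b) (hc : 0 < c) :
    a ⌈/⌉ b ⌈/⌉ c = a ⌈/⌉ (b * c) :=
  eq_of_forall_ge_iff fun x => by
    rw [ceilDiv_le_iff_le_mul hc, ceilDiv_le_iff_le_mul hb, ceilDiv_le_iff_le_mul (mul_pos hb hc),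
      mul_assoc]

theorem ceilDiv_mono {a a' b : ℕ} (hb : 0 < b) (h : a ≤ a') : a ⌈/⌉ b ≤ a' ⌈/⌉ b :=
  (gc_mul_ceilDiv hb).monotone_l h

theorem ceil_div_eq_ceilDiv {α : Type*} [Field α] [LinearOrder α] [IsStrictOrderedRing α]
    [FloorSemiring α] {b : ℕ} (hb : 0 < b) (a : ℕ) : ⌈(a : α) / b⌉₊ = a ⌈/⌉ b :=
  eq_of_forall_ge_iff fun x => by
    rw [Nat.ceil_le, div_le_iff₀ (by exact_mod_cast hb), ceilDiv_le_iff_le_mul hb, mul_comm]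
    exact_mod_cast Iff.rfl

end Nat

theorem Int.ceil_natCast_div_natCast {α : Type*} [Field α] [LinearOrder α]
    [IsStrictOrderedRing α] [FloorRing α] {b : ℕ} (hb : 0 < b) (a : ℕ) :
    ⌈(a : α) / b⌉ = ((a ⌈/⌉ b : ℕ) : ℤ) := by
  rw [← Nat.ceil_div_eq_ceilDiv (α := α) hb, Int.natCast_ceil_eq_ceil (by positivity)]

theorem finrank_le_finrank_map_add_one {K V W : Type*} [Field K] [AddCommGroup V] [Module K V]
    [AddCommGroup W] [Module K W] {f : V →ₗ[K] W} {C : Submodule K V} [FiniteDimensional K C]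
    {c : V} (hker : ∀ x ∈ C, f x = 0 → x ∈ K ∙ c) :
    finrank K C ≤ finrank K (C.map f) + 1 := by
  have hrank := (f.domRestrict C).finrank_range_add_finrank_ker
  rw [LinearMap.range_domRestrict] at hrank
  have hker_le : (LinearMap.ker (f.domRestrict C)).map C.subtype ≤ K ∙ c := by
    rintro _ ⟨⟨x, hx⟩, hfx, rfl⟩
    exact hker x hx hfx
  have hspan : finrank K (K ∙ c) ≤ 1 := by simpa using finrank_span_le_card (R := K) {c}
  have hker_rank := (Submodule.finrank_mono hker_le).trans hspan
  rw [Submodule.finrank_map_subtype_eq] at hker_rank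
  omega

theorem hammingNorm_subtype {ι β : Type*} [Fintype ι] [Zero β] [DecidableEq β] (p : ι → Prop)
    [DecidablePred p] (x : ι → β) :
    hammingNorm (fun j : {j // p j} => x j) = #{j | p j ∧ x j ≠ 0} := by
  rw [hammingNorm, ← card_map (Function.Embedding.subtype _)]
  congr 1
  ext j
  simp [and_comm]

section ResidualCode

variable {F ι : Type*} [Field F]

/-- `C.map (restrictToZeros c)` is the residual code of `C` with respect to `c`. -/
def restrictToZeros (c : ι → F) : (ι → F) →ₗ[F] ({j // c j = 0} → F) :=
  LinearMap.funLeft F F Subtype.val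

theorem restrictToZeros_self (c : ι → F) : restrictToZeros c c = 0 :=
  funext fun j => j.2

variable [DecidableEq F] [Fintype ι]

theorem hammingNorm_restrictToZeros (c x : ι → F) :
    hammingNorm (restrictToZeros c x) = #{j | c j = 0 ∧ x j ≠ 0} :=
  hammingNorm_subtype _ x

theorem card_zeros_add_hammingNorm (c : ι → F) :
    Fintype.card {j // c j = 0} + hammingNorm c = Fintype.card ι := by
  rw [Fintype.card_subtype, hammingNorm, card_filter_add_card_filter_not, card_univ]

variable [Fintype F] {C : Submodule F (ι → F)} {c : ι → F}

theorem hammingNorm_le_card_mul_hammingNorm_restrictToZeros (hc : c ∈ C)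
    (hmin : ∀ y ∈ C, y ≠ 0 → hammingNorm c ≤ hammingNorm y) {x : ι → F} (hx : x ∈ C)
    (hxc : x ∉ F ∙ c) :
    hammingNorm c ≤ Fintype.card F * hammingNorm (restrictToZeros c x) := by
  by_contra! hlt
  rw [hammingNorm_restrictToZeros] at hlt
  -- By pigeonhole `x = α • c` on more coordinates of the support of `c` than `x` has nonzero
  -- coordinates off it, which makes `x - α • c` lighter than `c`.
  obtain ⟨α, -, hfiber⟩ := exists_lt_card_fiber_of_mul_lt_card_of_maps_to
    (s := {j | c j ≠ 0}) (f := fun j => x j / c j) (fun _ _ => mem_univ _) (by rwa [card_univ])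
  have hy : x - α • c ≠ 0 := fun h =>
    hxc (Submodule.mem_span_singleton.2 ⟨α, (sub_eq_zero.1 h).symm⟩)
  have hcount : hammingNorm (x - α • c) + #{j ∈ {j | c j ≠ 0} | x j / c j = α} =
      hammingNorm c + #{j | c j = 0 ∧ x j ≠ 0} := by
    simp only [hammingNorm, filter_filter, card_filter, ← sum_add_distrib]
    refine sum_congr rfl fun j _ => ?_
    by_cases hcj : c j = 0
    · simp [hcj]
    · have : x j - α * c j = 0 ↔ x j / c j = α := by rw [sub_eq_zero, div_eq_iff hcj]
      by_cases hxj : x j / c j = α <;> simp_all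
  have := hmin _ (C.sub_mem hx (C.smul_mem α hc)) hy
  omega

theorem finrank_le_finrank_residual_add_one (hc : c ∈ C) (hc0 : c ≠ 0)
    (hmin : ∀ y ∈ C, y ≠ 0 → hammingNorm c ≤ hammingNorm y) :
    finrank F C ≤ finrank F (C.map (restrictToZeros c)) + 1 :=
  finrank_le_finrank_map_add_one fun x hx hx0 => by
    by_contra hxc
    have := hammingNorm_le_card_mul_hammingNorm_restrictToZeros hc hmin hx hxc
    rw [hx0, hammingNorm_zero, mul_zero, Nat.le_zero, hammingNorm_eq_zero] at this
    exact hc0 this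

theorem ceilDiv_le_hammingNorm_residual (hc : c ∈ C)
    (hmin : ∀ y ∈ C, y ≠ 0 → hammingNorm c ≤ hammingNorm y) {y : {j // c j = 0} → F}
    (hy : y ∈ C.map (restrictToZeros c)) (hy0 : y ≠ 0) :
    hammingNorm c ⌈/⌉ Fintype.card F ≤ hammingNorm y := by
  obtain ⟨x, hx, rfl⟩ := hy
  rw [ceilDiv_le_iff_le_mul Fintype.card_pos]
  refine hammingNorm_le_card_mul_hammingNorm_restrictToZeros hc hmin hx fun hxc => hy0 ?_
  obtain ⟨α, rfl⟩ := Submodule.mem_span_singleton.1 hxc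
  rw [map_smul, restrictToZeros_self, smul_zero]

theorem exists_min_hammingNorm (hC : 0 < finrank F C) :
    ∃ c ∈ C, c ≠ 0 ∧ ∀ y ∈ C, y ≠ 0 → hammingNorm c ≤ hammingNorm y := by
  obtain ⟨x, hx⟩ := finrank_pos_iff_exists_ne_zero.1 hC
  obtain ⟨c, ⟨hcC, hc0⟩, hmin⟩ := Set.exists_min_image {x | x ∈ C ∧ x ≠ 0} hammingNorm
    (Set.toFinite _) ⟨x, x.2, by simpa using hx⟩
  exact ⟨c, hcC, hc0, fun y hy hy0 => hmin y ⟨hy, hy0⟩⟩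

end ResidualCode

theorem griesmer_bound {F ι : Type*} [Field F] [Fintype F] [DecidableEq F] [Fintype ι]
    (C : Submodule F (ι → F)) {K d : ℕ} (hK : K ≤ finrank F C)
    (hd : ∀ x ∈ C, x ≠ 0 → d ≤ hammingNorm x) :
    ∑ l ∈ range K, d ⌈/⌉ Fintype.card F ^ l ≤ Fintype.card ι := by
  induction K generalizing ι C d with
  | zero => simp
  | succ K ih =>
    set q := Fintype.card F
    have hq : 0 < q := Fintype.card_pos
    obtain ⟨c, hcC, hc0, hmin⟩ := exists_min_hammingNorm (K.succ_pos.trans_le hK)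
    have hresidual := ih (C.map (restrictToZeros c))
      (by have := finrank_le_finrank_residual_add_one hcC hc0 hmin; omega)
      fun y hy hy0 => ceilDiv_le_hammingNorm_residual hcC hmin hy hy0
    calc ∑ l ∈ range (K + 1), d ⌈/⌉ q ^ l
        = d + ∑ l ∈ range K, d ⌈/⌉ q ^ (l + 1) := by
          rw [sum_range_succ', pow_zero, ceilDiv_one, add_comm]
      _ ≤ hammingNorm c + ∑ l ∈ range K, hammingNorm c ⌈/⌉ q ⌈/⌉ q ^ l := by
          have hdc := hd c hcC hc0
          gcongr with l
          rw [Nat.ceilDiv_ceilDiv hq (pow_pos hq l), ← pow_succ']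
          exact Nat.ceilDiv_mono (pow_pos hq _) hdc
      _ ≤ hammingNorm c + Fintype.card {j // c j = 0} := by gcongr
      _ = Fintype.card ι := by rw [add_comm, card_zeros_add_hammingNorm]

theorem Polynomial.mul_mem_degreeLT {R : Type*} [Semiring R] {p q : R[X]} {a b : ℕ}
    (hp : p ∈ degreeLT R a) (hq : q.natDegree ≤ b) : p * q ∈ degreeLT R (a + b) := by
  rcases eq_or_ne q 0 with rfl | hq0
  · simp
  rw [mem_degreeLT] at hp ⊢
  rw [Nat.cast_add]
  exact (degree_mul_le p q).trans_lt <| WithBot.add_lt_add_of_lt_of_le (by simpa using hq0) hp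
    (degree_le_natDegree.trans (by exact_mod_cast hq))

theorem Polynomial.card_filter_coeff_ne_zero {R : Type*} [Semiring R] [DecidableEq R]
    {p : R[X]} {N : ℕ} (hp : p ∈ degreeLT R N) :
    #{t : Fin N | p.coeff t ≠ 0} = p.support.card := by
  rw [← card_map Fin.valEmbedding]
  congr 1
  ext t
  simp only [mem_map, mem_filter, mem_univ, true_and, Fin.valEmbedding_apply, mem_support_iff]
  refine ⟨fun ⟨t', ht', h⟩ => h ▸ ht', fun ht => ⟨⟨t, ?_⟩, ht, rfl⟩⟩
  by_contra! hNt
  exact ht (coeff_eq_zero_of_degree_lt ((mem_degreeLT.1 hp).trans_le (by exact_mod_cast hNt)))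

section Truncation

variable {F ι κ : Type*} [Field F] [Fintype κ]

variable (F ι) in
noncomputable def truncCoeffs (N : ℕ) : (ι → F[X]) →ₗ[F] (ι × Fin N → F) :=
  LinearMap.pi fun p => lcoeff F p.2 ∘ₗ LinearMap.proj p.1

theorem hammingNorm_truncCoeffs [Fintype ι] [DecidableEq F] {N : ℕ} {v : ι → F[X]}
    (hv : ∀ j, v j ∈ degreeLT F N) :
    hammingNorm (truncCoeffs F ι N v) = ∑ j, (v j).support.card := by
  rw [hammingNorm, card_filter, Fintype.sum_prod_type]
  refine sum_congr rfl fun j _ => ?_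
  rw [← card_filter_coeff_ne_zero (hv j), card_filter]
  rfl

theorem eq_zero_of_truncCoeffs_eq_zero {N : ℕ} {v : ι → F[X]} (hv : ∀ j, v j ∈ degreeLT F N)
    (h : truncCoeffs F ι N v = 0) : v = 0 := by
  funext j
  rw [Pi.zero_apply, ← degreeLTEquiv_eq_zero_iff_eq_zero (hv j)]
  funext t
  exact congrFun h (j, t)

theorem vecMul_mem_degreeLT {G : Matrix κ ι F[X]} {u : κ → F[X]} {ν s : κ → ℕ} {N : ℕ}
    (hG : ∀ r j, (G r j).natDegree ≤ ν r) (hu : ∀ r, u r ∈ degreeLT F (s r))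
    (hN : ∀ r, s r + ν r ≤ N) (j : ι) : (u ᵥ* G) j ∈ degreeLT F N :=
  Submodule.sum_mem _ fun r _ => degreeLT_mono (hN r) (mul_mem_degreeLT (hu r) (hG r j))

noncomputable def truncatedEncoder (G : Matrix κ ι F[X]) (s : κ → ℕ) (N : ℕ) :
    (Π r, degreeLT F (s r)) →ₗ[F] (ι × Fin N → F) :=
  truncCoeffs F ι N ∘ₗ (vecMulLinear G).restrictScalars F ∘ₗ
    LinearMap.piMap fun r => (degreeLT F (s r)).subtype

theorem truncatedEncoder_apply (G : Matrix κ ι F[X]) (s : κ → ℕ) (N : ℕ)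
    (a : Π r, degreeLT F (s r)) :
    truncatedEncoder G s N a = truncCoeffs F ι N ((fun r => (a r : F[X])) ᵥ* G) :=
  rfl

theorem truncatedEncoder_injective [Fintype ι] [DecidableEq κ] {G : Matrix κ ι F[X]}
    (hG : ∃ H : Matrix ι κ F[X], G * H = 1) {ν s : κ → ℕ} {N : ℕ}
    (hν : ∀ r j, (G r j).natDegree ≤ ν r) (hN : ∀ r, s r + ν r ≤ N) :
    Function.Injective (truncatedEncoder G s N) := by
  obtain ⟨H, hH⟩ := hG
  refine (injective_iff_map_eq_zero _).2 fun a ha => ?_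
  set u : κ → F[X] := fun r => a r
  have huG : u ᵥ* G = 0 :=
    eq_zero_of_truncCoeffs_eq_zero (vecMul_mem_degreeLT hν (fun r => (a r).2) hN) ha
  have hu : u = 0 := by rw [← vecMul_one u, ← hH, ← vecMul_vecMul, huG, zero_vecMul]
  exact funext fun r => Subtype.ext (congrFun hu r)

theorem finrank_pi_degreeLT (s : κ → ℕ) : finrank F (Π r, degreeLT F (s r)) = ∑ r, s r := by
  simp [Module.finrank_pi_fintype, (degreeLTEquiv F _).finrank_eq]

end Truncation

theorem griesmer_bound_of_natDegree_le {F κ : Type*} [Field F] [Fintype F] [Fintype κ]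
    [DecidableEq κ] {n : ℕ} {G : Matrix κ (Fin n) F[X]}
    (hG : ∃ H : Matrix (Fin n) κ F[X], G * H = 1) {ν : κ → ℕ} {N d : ℕ}
    (hν : ∀ r j, (G r j).natDegree ≤ ν r) (hN : ∀ r, ν r ≤ N)
    (hd : ∀ u : κ → F[X], u ≠ 0 → d ≤ polyWt (u ᵥ* G)) :
    ∑ l ∈ range (∑ r, (N - ν r)), d ⌈/⌉ Fintype.card F ^ l ≤ n * N := by
  classical
  set E := truncatedEncoder G (N - ν ·) N
  have hsN : ∀ r, (N - ν r) + ν r ≤ N := fun r => (Nat.sub_add_cancel (hN r)).le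
  have hdim : ∑ r, (N - ν r) ≤ finrank F (LinearMap.range E) := by
    rw [LinearMap.finrank_range_of_inj (truncatedEncoder_injective hG hν hsN),
      finrank_pi_degreeLT]
  have hwt : ∀ x ∈ LinearMap.range E, x ≠ 0 → d ≤ hammingNorm x := by
    rintro _ ⟨a, rfl⟩ ha
    rw [truncatedEncoder_apply,
      hammingNorm_truncCoeffs (vecMul_mem_degreeLT hν (fun r => (a r).2) hsN)]
    refine hd _ fun hu => ha ?_
    rw [← map_zero E]
    exact congrArg E (funext fun r => Subtype.ext (congrFun hu r))
  simpa using griesmer_bound _ hdim hwt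

theorem convolutional_griesmer_bound_general
    {F : Type*} [Field F] [Fintype F] {q k n : ℕ} (hq : Fintype.card F = q)
    (G : Matrix (Fin k) (Fin n) (Polynomial F))
    (hright : ∃ H : Matrix (Fin n) (Fin k) (Polynomial F), G * H = 1)
    (ν : Fin k → ℕ) (hν : ∀ r, ν r = rowDeg G r)
    (δ m : ℕ) (hδ : δ = ∑ r, ν r)
    (hm : m = Finset.univ.sup ν)
    (d : ℕ)
    (hd : IsLeast {w : ℕ | ∃ u : Fin k → Polynomial F,
      u ≠ 0 ∧ w = polyWt (Matrix.vecMul u G)} d)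
    (i : ℕ) :
    ∑ l ∈ Finset.range (k * (m + i) - δ), ⌈(d : ℚ) / (q : ℚ) ^ l⌉ ≤ (n * (m + i) : ℕ) := by
  have hνm : ∀ r, ν r ≤ m + i := fun r => by rw [hm]; exact le_add_right (le_sup (mem_univ r))
  have hG : ∀ r j, (G r j).natDegree ≤ ν r := fun r j =>
    hν r ▸ le_sup (f := fun j => (G r j).natDegree) (mem_univ j)
  have hdim : ∑ r, (m + i - ν r) = k * (m + i) - δ := by
    rw [sum_tsub_distrib _ fun r _ => hνm r, hδ, sum_const, card_univ, Fintype.card_fin,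
      smul_eq_mul]
  have hbound := griesmer_bound_of_natDegree_le hright hG hνm fun u hu => hd.2 ⟨u, hu, rfl⟩
  rw [hdim, hq] at hbound
  calc ∑ l ∈ range (k * (m + i) - δ), ⌈(d : ℚ) / (q : ℚ) ^ l⌉
      = ((∑ l ∈ range (k * (m + i) - δ), d ⌈/⌉ q ^ l : ℕ) : ℤ) := by
        rw [Nat.cast_sum]
        refine sum_congr rfl fun l _ => ?_
        rw [← Nat.cast_pow]
        exact Int.ceil_natCast_div_natCast (pow_pos (hq ▸ Fintype.card_pos) l) d
    _ ≤ (n * (m + i) : ℕ) := by exact_mod_cast hbound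

/-- **Griesmer bound for convolutional codes.**
Let `F_q` be a finite field with `q` elements, `G ∈ F_q[z]^{k×n}` (`1 ≤ k < n`)
right invertible and minimal with row degrees `ν`, complexity `δ = ∑ ν r`, memory
`m = max ν`, and let `d` be the free distance of the convolutional code generated
by `G`.  Then for every integer `i` (with `i ≥ 1` if `km = δ`, resp. `i ≥ 0` if
`km > δ`) one has `∑_{l=0}^{k(m+i)-δ-1} ⌈d/q^l⌉ ≤ n(m+i)`. -/
theorem convolutional_griesmer_bound
    {F : Type*} [Field F] [Fintype F] {q k n : ℕ} (hq : Fintype.card F = q)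
    (hk : 1 ≤ k) (hkn : k < n)
    (G : Matrix (Fin k) (Fin n) (Polynomial F))
    (hright : ∃ H : Matrix (Fin n) (Fin k) (Polynomial F), G * H = 1)
    (ν : Fin k → ℕ) (hν : ∀ r, ν r = rowDeg G r)
    (δ m : ℕ) (hδ : δ = ∑ r, ν r)
    (hminimal : complexity G = δ)
    (hm : m = Finset.univ.sup ν)
    (d : ℕ)
    (hd : IsLeast {w : ℕ | ∃ u : Fin k → Polynomial F,
      u ≠ 0 ∧ w = polyWt (Matrix.vecMul u G)} d)
    (i : ℕ) (hi : k * m = δ → 1 ≤ i) :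
    ∑ l ∈ Finset.range (k * (m + i) - δ), ⌈(d : ℚ) / (q : ℚ) ^ l⌉ ≤ (n * (m + i) : ℕ) :=
  convolutional_griesmer_bound_general hq G hright ν hν δ m hδ hm d hd i
end

section
/- The Griesmer bound is at least as good as the Heller bound: let q ≥ 2 be a prime power and n, k, δ, m integers with 1 ≤ k < n, δ ≥ 0, and km ≥ δ, and let Ĥℕ = {i ∈ ℤ : i ≥ 1} if km = δ and Ĥℕ = {i ∈ ℤ : i ≥ 0} if km > δ. If a positive integer d' satisfies ∑_{l=0}^{k(m+i)-δ-1} ⌈d'/q^l⌉ ≤ n(m+i) for all i ∈ Ĥℕ, then d' ≤ ⌊ n(m+i)·q^{k(m+i)-δ-1}·(q-1) / (q^{k(m+i)-δ} - 1) ⌋ for all i ∈ Ĥℕ; in particular, the Griesmer bound value G_q(n,k,δ;m) is at most the Heller bound value H_q(n,k,δ;m). -/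
/-- **The Griesmer bound is at least as good as the Heller bound.**
Let `q ≥ 2` be a prime power and `n, k, δ, m` integers with `1 ≤ k < n`, `δ ≥ 0`,
`km ≥ δ`.  The admissible index set is `{i ≥ 1}` if `km = δ`, and `{i ≥ 0}` if `km > δ`
(encoded by the hypothesis `k * m = δ → 1 ≤ i`).  If a positive integer `d'` satisfies
the Griesmer inequalities `∑_{l=0}^{k(m+i)-δ-1} ⌈d'/q^l⌉ ≤ n(m+i)` for all admissible `i`,
then `d' ≤ ⌊ n(m+i)·q^{k(m+i)-δ-1}·(q-1) / (q^{k(m+i)-δ} - 1) ⌋` for all admissible `i`;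
in particular the Griesmer bound value `G_q(n,k,δ;m)` is at most the Heller bound value
`H_q(n,k,δ;m)`. -/
theorem griesmer_le_heller (q n k δ m : ℕ) (hq : IsPrimePow q) (hq2 : 2 ≤ q)
    (hk : 1 ≤ k) (hkn : k < n) (hδm : δ ≤ k * m)
    (d' : ℕ) (hd' : 0 < d')
    (hgriesmer : ∀ i : ℕ, (k * m = δ → 1 ≤ i) →
      ∑ l ∈ Finset.range (k * (m + i) - δ), ⌈(d' : ℚ) / (q : ℚ) ^ l⌉ ≤ (n * (m + i) : ℕ)) :
    ∀ i : ℕ, (k * m = δ → 1 ≤ i) →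
      (d' : ℤ) ≤ ⌊((n * (m + i) : ℕ) : ℚ) * (q : ℚ) ^ (k * (m + i) - δ - 1) * ((q : ℚ) - 1) /
          ((q : ℚ) ^ (k * (m + i) - δ) - 1)⌋ := by
  intro i hi
  set s := k * (m + i) - δ with hsdef
  have hexp : k * (m + i) = k * m + k * i := Nat.mul_add k m i
  have hs1 : 1 ≤ s := by
    rcases eq_or_lt_of_le hδm with h | h
    · have hi1 := hi h.symm
      have : k ≤ k * i := Nat.le_mul_of_pos_right k (by omega)
      omega
    · omega
  have hQ1 : (1:ℚ) < (q:ℚ) := by exact_mod_cast (by omega : 1 < q)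
  have hQ0 : (0:ℚ) < (q:ℚ) := by linarith
  have hpow : (0:ℚ) < (q:ℚ) ^ s - 1 := by
    have := one_lt_pow₀ hQ1 (by omega : s ≠ 0)
    linarith
  rw [Int.le_floor, le_div_iff₀ hpow]
  have h1 : ∑ l ∈ Finset.range s, (d':ℚ)/(q:ℚ)^l ≤ ((n*(m+i):ℕ):ℚ) := by
    calc ∑ l ∈ Finset.range s, (d':ℚ)/(q:ℚ)^l
        ≤ ∑ l ∈ Finset.range s, ((⌈(d':ℚ)/(q:ℚ)^l⌉ : ℤ) : ℚ) :=
          Finset.sum_le_sum fun l _ => Int.le_ceil _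
      _ ≤ _ := by exact_mod_cast hgriesmer i hi
  have key : (∑ l ∈ Finset.range s, (d':ℚ)/(q:ℚ)^l) * (q:ℚ)^(s-1) * ((q:ℚ)-1)
      = (d':ℚ) * ((q:ℚ)^s - 1) := by
    have step1 : (∑ l ∈ Finset.range s, (d':ℚ)/(q:ℚ)^l) * (q:ℚ)^(s-1)
        = (d':ℚ) * ∑ l ∈ Finset.range s, (q:ℚ)^l := by
      rw [Finset.sum_mul]
      rw [← Finset.sum_range_reflect (fun l => (q:ℚ)^l) s, Finset.mul_sum]
      refine Finset.sum_congr rfl fun l hl => ?_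
      have hl' : l < s := Finset.mem_range.mp hl
      have hq : (q:ℚ)^(s-1) = (q:ℚ)^l * (q:ℚ)^(s-1-l) := by
        rw [← pow_add]; congr 1; omega
      have hne : ((q:ℚ)^l) ≠ 0 := by positivity
      rw [hq]; field_simp
    rw [step1, mul_assoc, geom_sum_mul]
  have hfac : (0:ℚ) ≤ (q:ℚ)^(s-1) * ((q:ℚ)-1) := mul_nonneg (by positivity) (by linarith)
  calc ((d':ℕ):ℚ) * ((q:ℚ)^s - 1)
      = (∑ l ∈ Finset.range s, (d':ℚ)/(q:ℚ)^l) * (q:ℚ)^(s-1) * ((q:ℚ)-1) := key.symm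
    _ ≤ ((n*(m+i):ℕ):ℚ) * (q:ℚ)^(s-1) * ((q:ℚ)-1) := by
        rw [mul_assoc, mul_assoc]
        exact mul_le_mul_of_nonneg_right h1 hfac
end

section
/- Finiteness of the Griesmer bound test: let q ≥ 2 be a prime power and n, k, δ, m integers with 1 ≤ k < n, δ ≥ 0, km ≥ δ, let S = S(n,k,δ) = (n-k)(⌊δ/k⌋+1)+δ+1, let Ĥℕ = {i ∈ ℤ : i ≥ 1} if km = δ and Ĥℕ = {i ∈ ℤ : i ≥ 0} if km > δ, and let i_0 ≥ 1 be an integer with q^{k(m+i_0)-δ} ≥ S. Then for every integer d' with 1 ≤ d' ≤ S, the inequalities ∑_{l=0}^{k(m+i)-δ-1} ⌈d'/q^l⌉ ≤ n(m+i) hold for all i ∈ Ĥℕ if and only if they hold for all i ∈ Ĥℕ with i ≤ i_0. -/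
/-!
Once `q ^ L ≥ S ≥ d'`, every term `⌈d' / q ^ l⌉` with `l ≥ L` is at most `1`. Passing from `i₀` to
`i ≥ i₀` adds at most `k (i - i₀)` terms to the Griesmer sum, hence raises it by at most
`k (i - i₀) ≤ n (i - i₀)`, which is exactly the growth of the right-hand side `n (m + i)`.
So the inequality at `i₀` implies it at every larger `i`.
-/

open Finset

def griesmerSum (q d L : ℕ) : ℤ :=
  ∑ l ∈ range L, ⌈(d : ℚ) / (q : ℚ) ^ l⌉

theorem Int.ceil_div_pow_le_one {K : Type*} [Field K] [LinearOrder K] [IsStrictOrderedRing K]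
    [FloorRing K] {x y : K} {L l : ℕ} (hy : 1 ≤ y) (hx : x ≤ y ^ L) (hl : L ≤ l) :
    ⌈x / y ^ l⌉ ≤ 1 := by
  rw [Int.ceil_le, Int.cast_one, div_le_one (pow_pos (zero_lt_one.trans_le hy) l)]
  exact hx.trans (pow_le_pow_right₀ hy hl)

theorem Finset.sum_range_add_le_of_le_one {f : ℕ → ℤ} {a : ℕ} (hf : ∀ l, a ≤ l → f l ≤ 1)
    (t : ℕ) : ∑ l ∈ range (a + t), f l ≤ ∑ l ∈ range a, f l + t := by
  rw [sum_range_add]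
  gcongr
  calc ∑ l ∈ range t, f (a + l) ≤ ∑ _l ∈ range t, (1 : ℤ) :=
        sum_le_sum fun l _ => hf (a + l) (Nat.le_add_right a l)
    _ = t := by simp

theorem griesmerSum_le_add_sub {q d L L' : ℕ} (hq : 1 ≤ q) (hd : (d : ℤ) ≤ (q : ℤ) ^ L)
    (hL : L ≤ L') : griesmerSum q d L' ≤ griesmerSum q d L + (L' - L : ℕ) := by
  have hterm : ∀ l, L ≤ l → ⌈(d : ℚ) / (q : ℚ) ^ l⌉ ≤ 1 := fun l hl =>
    Int.ceil_div_pow_le_one (by exact_mod_cast hq) (by exact_mod_cast hd) hl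
  unfold griesmerSum
  rw [← Nat.add_sub_of_le hL, Nat.add_sub_cancel_left]
  exact sum_range_add_le_of_le_one hterm _

theorem griesmerSum_le_of_le_index {q d n k δ m i₀ i : ℕ} (hq : 1 ≤ q) (hkn : k ≤ n)
    (hd : (d : ℤ) ≤ (q : ℤ) ^ (k * (m + i₀) - δ)) (hi : i₀ ≤ i)
    (h₀ : griesmerSum q d (k * (m + i₀) - δ) ≤ (n * (m + i₀) : ℕ)) :
    griesmerSum q d (k * (m + i) - δ) ≤ (n * (m + i) : ℕ) := by
  obtain ⟨j, rfl⟩ := Nat.exists_eq_add_of_le hi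
  have hlen : k * (m + (i₀ + j)) - δ - (k * (m + i₀) - δ) ≤ n * j := by
    have : k * (m + (i₀ + j)) = k * (m + i₀) + k * j := by ring
    have : k * j ≤ n * j := Nat.mul_le_mul_right j hkn
    omega
  have hgrow := griesmerSum_le_add_sub hq hd
    (Nat.sub_le_sub_right (Nat.mul_le_mul_left k (by omega : m + i₀ ≤ m + (i₀ + j))) δ)
  have hrhs : n * (m + (i₀ + j)) = n * (m + i₀) + n * j := by ring
  rw [hrhs]
  push_cast at hgrow h₀ hlen ⊢
  linarith

theorem griesmer_bound_finitely_many_tests_general (q n k δ m i₀ : ℕ)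
    (hq2 : 2 ≤ q) (hkn : k < n) (hi₀ : 1 ≤ i₀)
    (S : ℕ)
    (hqS : (S : ℤ) ≤ (q : ℤ) ^ (k * (m + i₀) - δ))
    (d' : ℕ) (hd'S : d' ≤ S) :
    (∀ i : ℕ, (k * m = δ → 1 ≤ i) →
      ∑ l ∈ Finset.range (k * (m + i) - δ), ⌈(d' : ℚ) / (q : ℚ) ^ l⌉ ≤ (n * (m + i) : ℕ)) ↔
    (∀ i : ℕ, (k * m = δ → 1 ≤ i) → i ≤ i₀ →
      ∑ l ∈ Finset.range (k * (m + i) - δ), ⌈(d' : ℚ) / (q : ℚ) ^ l⌉ ≤ (n * (m + i) : ℕ)) := by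
  refine ⟨fun h i hi _ => h i hi, fun h i hi => ?_⟩
  rcases le_total i i₀ with hle | hge
  · exact h i hi hle
  · have hd' : (d' : ℤ) ≤ (q : ℤ) ^ (k * (m + i₀) - δ) := (Int.ofNat_le.mpr hd'S).trans hqS
    exact griesmerSum_le_of_le_index (by omega) hkn.le hd' hge (h i₀ (fun _ => hi₀) le_rfl)

/-- **Finiteness of the Griesmer bound test.**
Let `q ≥ 2` be a prime power and `n, k, δ, m` integers with `1 ≤ k < n`, `δ ≥ 0`, `km ≥ δ`,
let `S = (n-k)(⌊δ/k⌋+1)+δ+1` be the generalized Singleton bound and let `i₀ ≥ 1` with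
`q^{k(m+i₀)-δ} ≥ S`.  The admissible index set is `{i ≥ 1}` if `km = δ` and `{i ≥ 0}`
otherwise (encoded by `k * m = δ → 1 ≤ i`).  Then for every integer `d'` with `1 ≤ d' ≤ S`,
the Griesmer inequalities `∑_{l=0}^{k(m+i)-δ-1} ⌈d'/q^l⌉ ≤ n(m+i)` hold for all admissible
`i` if and only if they hold for all admissible `i ≤ i₀`. -/
theorem griesmer_bound_finitely_many_tests (q n k δ m i₀ : ℕ) (hq : IsPrimePow q)
    (hq2 : 2 ≤ q) (hk : 1 ≤ k) (hkn : k < n) (hδm : δ ≤ k * m) (hi₀ : 1 ≤ i₀)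
    (S : ℕ) (hS : S = (n - k) * (δ / k + 1) + δ + 1)
    (hqS : (S : ℤ) ≤ (q : ℤ) ^ (k * (m + i₀) - δ))
    (d' : ℕ) (hd'1 : 1 ≤ d') (hd'S : d' ≤ S) :
    (∀ i : ℕ, (k * m = δ → 1 ≤ i) →
      ∑ l ∈ Finset.range (k * (m + i) - δ), ⌈(d' : ℚ) / (q : ℚ) ^ l⌉ ≤ (n * (m + i) : ℕ)) ↔
    (∀ i : ℕ, (k * m = δ → 1 ≤ i) → i ≤ i₀ →
      ∑ l ∈ Finset.range (k * (m + i) - δ), ⌈(d' : ℚ) / (q : ℚ) ^ l⌉ ≤ (n * (m + i) : ℕ)) :=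
  griesmer_bound_finitely_many_tests_general q n k δ m i₀ hq2 hkn hi₀ S hqS d' hd'S
end

section
/- Field size of MDS convolutional codes, second case: Let F_q be a finite field with q elements and let G ∈ F_q[z]^{k×n} (1 ≤ k < n) be right invertible and minimal with row degrees ν_1,…,ν_k, complexity δ = ν_1 + … + ν_k, and memory m = max{ν_1,…,ν_k}. Suppose the free distance d = min{ wt(uG) : u ∈ F_q[z]^k, u ≠ 0 } equals the generalized Singleton bound S(n,k,δ) = (n-k)(⌊δ/k⌋+1)+δ+1, i.e., the code is MDS. If k > 1 and km ≠ δ + 1, then q ≥ d. -/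
open Polynomial Matrix

section Aux
variable {F : Type*} [Field F] {k n : ℕ}

/-- Coefficient tuples to polynomial vectors. -/
noncomputable def iotaP (c : Fin k → ℕ) (v : ∀ i, Fin (c i) → F) : Fin k → Polynomial F :=
  fun i => ∑ τ : Fin (c i), Polynomial.C (v i τ) * Polynomial.X ^ (τ : ℕ)

lemma iotaP_coeff (c : Fin k → ℕ) (v : ∀ i, Fin (c i) → F) (i : Fin k) (τ : Fin (c i)) :
    (iotaP c v i).coeff (τ : ℕ) = v i τ := by
  classical
  unfold iotaP
  rw [Polynomial.finset_sum_coeff]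
  simp only [Polynomial.coeff_C_mul, Polynomial.coeff_X_pow]
  rw [Finset.sum_eq_single τ]
  · simp
  · intro b _ hb
    have hne : ¬ ((τ : ℕ) = (b : ℕ)) := by
      simpa [Fin.val_eq_val] using (Ne.symm hb)
    simp [hne]
  · simp

lemma iotaP_add (c : Fin k → ℕ) (v w : ∀ i, Fin (c i) → F) :
    iotaP c (v + w) = iotaP c v + iotaP c w := by
  funext i
  simp [iotaP, Finset.sum_add_distrib, add_mul, Polynomial.C_add]

lemma iotaP_smul (c : Fin k → ℕ) (a : F) (v : ∀ i, Fin (c i) → F) :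
    iotaP c (a • v) = a • iotaP c v := by
  funext i
  simp [iotaP, Finset.smul_sum, Polynomial.smul_eq_C_mul, Polynomial.C_mul, mul_assoc]

lemma iotaP_eq_zero (c : Fin k → ℕ) (v : ∀ i, Fin (c i) → F)
    (h : iotaP c v = 0) : v = 0 := by
  funext i τ
  have h1 := iotaP_coeff c v i τ
  rw [congrFun h i] at h1
  simpa using h1.symm

lemma iotaP_zero_of (c : Fin k → ℕ) (v : ∀ i, Fin (c i) → F) (i : Fin k)
    (h : c i = 0) : iotaP c v i = 0 := by
  haveI : IsEmpty (Fin (c i)) := by rw [h]; infer_instance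
  simp [iotaP]

lemma iotaP_natDegree_le (c : Fin k → ℕ) (v : ∀ i, Fin (c i) → F) (i : Fin k) :
    (iotaP c v i).natDegree ≤ c i - 1 := by
  apply Polynomial.natDegree_sum_le_of_forall_le
  intro τ _
  calc (Polynomial.C (v i τ) * Polynomial.X ^ (τ : ℕ)).natDegree
      ≤ (Polynomial.X ^ (τ : ℕ) : Polynomial F).natDegree := Polynomial.natDegree_C_mul_le _ _
    _ ≤ c i - 1 := by rw [Polynomial.natDegree_X_pow]; omega

lemma vecMul_apply' (G : Matrix (Fin k) (Fin n) (Polynomial F))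
    (u : Fin k → Polynomial F) (j : Fin n) :
    Matrix.vecMul u G j = ∑ i, u i * G i j := by
  simp [Matrix.vecMul, dotProduct]

/-- Coefficient of a codeword at a position `p`. -/
noncomputable def coefAt (G : Matrix (Fin k) (Fin n) (Polynomial F)) (l : ℕ)
    (u : Fin k → Polynomial F) (p : Fin n × Fin (l+1)) : F :=
  ((Matrix.vecMul u G) p.1).coeff (p.2 : ℕ)

lemma coefAt_add (G : Matrix (Fin k) (Fin n) (Polynomial F)) (l : ℕ)
    (u w : Fin k → Polynomial F) (p : Fin n × Fin (l+1)) :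
    coefAt G l (u + w) p = coefAt G l u p + coefAt G l w p := by
  simp [coefAt, Matrix.add_vecMul]

lemma coefAt_smul (G : Matrix (Fin k) (Fin n) (Polynomial F)) (l : ℕ)
    (a : F) (u : Fin k → Polynomial F) (p : Fin n × Fin (l+1)) :
    coefAt G l (a • u) p = a * coefAt G l u p := by
  simp only [coefAt, vecMul_apply', Polynomial.finset_sum_coeff]
  rw [Finset.mul_sum]
  congr 1
  funext i
  rw [Pi.smul_apply, smul_mul_assoc, Polynomial.coeff_smul, smul_eq_mul]

/-- The linear map recording the coefficients of the codeword `(iotaP c v) * G` at the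
positions in `P`. -/
noncomputable def thetaMap (G : Matrix (Fin k) (Fin n) (Polynomial F)) (l : ℕ)
    (c : Fin k → ℕ) (P : Finset (Fin n × Fin (l+1))) :
    (∀ i, Fin (c i) → F) →ₗ[F] (↥P → F) where
  toFun v := fun p => coefAt G l (iotaP c v) p.1
  map_add' v w := by
    funext p
    simp [iotaP_add, coefAt_add]
  map_smul' a v := by
    funext p
    simp [iotaP_smul, coefAt_smul]

open scoped Classical in
lemma polyWt_eq_card (l : ℕ) (v : Fin n → Polynomial F)
    (hdeg : ∀ j, (v j).natDegree ≤ l) :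
    polyWt v = (Finset.univ.filter
      (fun p : Fin n × Fin (l+1) => (v p.1).coeff (p.2 : ℕ) ≠ 0)).card := by
  unfold polyWt
  have hj : ∀ j : Fin n, (v j).support.card
      = (Finset.univ.filter (fun τ : Fin (l+1) => (v j).coeff (τ : ℕ) ≠ 0)).card := by
    intro j
    refine Finset.card_bij'
      (fun (a : ℕ) (ha : a ∈ (v j).support) =>
        (⟨a, by
          have h1 : a ≤ (v j).natDegree := Polynomial.le_natDegree_of_mem_supp a ha
          have h2 := hdeg j
          omega⟩ : Fin (l+1)))
      (fun (τ : Fin (l+1)) _ => (τ : ℕ)) ?_ ?_ ?_ ?_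
    · intro a ha
      simp only [Finset.mem_filter, Finset.mem_univ, true_and]
      simpa using Polynomial.mem_support_iff.mp ha
    · intro τ hτ
      simp only [Finset.mem_filter, Finset.mem_univ, true_and] at hτ
      exact Polynomial.mem_support_iff.mpr hτ
    · intro a ha; rfl
    · intro τ hτ; rfl
  rw [Finset.card_filter]
  rw [Fintype.sum_prod_type]
  refine Finset.sum_congr rfl (fun j _ => ?_)
  rw [hj j, Finset.card_filter]

end Aux

/-- **Field size of MDS convolutional codes, second case.**
Let `F_q` be a finite field with `q` elements, `G ∈ F_q[z]^{k×n}` (`1 ≤ k < n`)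
right invertible and minimal with row degrees `ν`, complexity `δ = ∑ ν r`, memory
`m = max ν`, and suppose the free distance `d` equals the generalized Singleton bound
`S(n,k,δ) = (n-k)(⌊δ/k⌋+1)+δ+1`, i.e., the code is MDS.  If `k > 1` and `km ≠ δ + 1`,
then `q ≥ d`. -/
theorem mds_field_size_second_case
    {F : Type*} [Field F] [Fintype F] {q k n : ℕ} (hq : Fintype.card F = q)
    (hk : 1 ≤ k) (hkn : k < n)
    (G : Matrix (Fin k) (Fin n) (Polynomial F))
    (hright : ∃ H : Matrix (Fin n) (Fin k) (Polynomial F), G * H = 1)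
    (ν : Fin k → ℕ) (hν : ∀ r, ν r = rowDeg G r)
    (δ m : ℕ) (hδ : δ = ∑ r, ν r)
    (hminimal : complexity G = δ)
    (hm : m = Finset.univ.sup ν)
    (d : ℕ)
    (hd : IsLeast {w : ℕ | ∃ u : Fin k → Polynomial F,
      u ≠ 0 ∧ w = polyWt (Matrix.vecMul u G)} d)
    (hMDS : d = (n - k) * (δ / k + 1) + δ + 1)
    (hcase : 1 < k ∧ k * m ≠ δ + 1) :
    d ≤ q := by
  classical
  obtain ⟨hk2, hkm⟩ := hcase
  set l : ℕ := δ / k with hl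
  have hk0 : 0 < k := hk
  have hδmod : k * l + δ % k = δ := by rw [hl]; exact Nat.div_add_mod δ k
  have hmodlt : δ % k < k := Nat.mod_lt _ hk0
  have hmulsucc : k * (l + 1) = k * l + k := Nat.mul_succ k l
  have hδlt : δ + 1 ≤ k * (l + 1) := by omega
  set t : ℕ := k * (l + 1) - (δ + 1) with ht
  have htk : k * (l + 1) = δ + 1 + t := by omega
  -- degrees of entries of G
  have hGdeg : ∀ i j, (G i j).natDegree ≤ ν i := by
    intro i j
    rw [hν]
    unfold rowDeg
    exact Finset.le_sup (f := fun j => (G i j).natDegree) (Finset.mem_univ j)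
  set c : Fin k → ℕ := fun i => l + 1 - ν i with hc
  -- dimension bound : ∑ c ≥ (t-1) + 2
  have hνm : ∀ i, ν i ≤ m := by
    intro i; rw [hm]; exact Finset.le_sup (Finset.mem_univ i)
  have hsumc : (t - 1) + 2 ≤ ∑ i, c i := by
    have h1 : ∀ i : Fin k, l + 1 ≤ ν i + c i := by
      intro i; simp only [hc]; omega
    have h2 : k * (l + 1) ≤ ∑ i, (ν i + c i) := by
      calc k * (l + 1) = ∑ _i : Fin k, (l + 1) := by
            rw [Finset.sum_const, Finset.card_univ, Fintype.card_fin, smul_eq_mul, mul_comm]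
        _ ≤ ∑ i, (ν i + c i) := Finset.sum_le_sum (fun i _ => h1 i)
    have h3 : ∑ i, (ν i + c i) = δ + ∑ i, c i := by
      rw [Finset.sum_add_distrib, ← hδ]
    rcases Nat.lt_or_ge t 1 with hti | hti
    · -- t = 0 : need ∑ c ≥ 2
      have ht0 : t = 0 := by omega
      -- first, m ≥ l + 2
      have hmbig : l + 2 ≤ m := by
        by_contra hcon
        push_neg at hcon
        have hmle : m ≤ l + 1 := by omega
        have hkm1 : k * m ≤ k * (l + 1) := Nat.mul_le_mul_left k hmle
        have hδkm : δ ≤ k * m := by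
          rw [hδ]
          calc ∑ i, ν i ≤ ∑ _i : Fin k, m := Finset.sum_le_sum (fun i _ => hνm i)
            _ = k * m := by
              rw [Finset.sum_const, Finset.card_univ, Fintype.card_fin, smul_eq_mul]
        have hkmδ : k * m = δ := by omega
        have hdvd : k ∣ 1 := by
          have h4 : k * (l + 1) - k * m = 1 := by omega
          have h5 : k ∣ k * (l + 1) := ⟨l + 1, rfl⟩
          have h6 : k ∣ k * m := ⟨m, rfl⟩
          have h7 := Nat.dvd_sub h5 h6
          rwa [h4] at h7
        have := Nat.le_of_dvd one_pos hdvd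
        omega
      haveI : Nonempty (Fin k) := ⟨⟨0, hk0⟩⟩
      obtain ⟨i0, -, hi0⟩ := Finset.exists_mem_eq_sup (Finset.univ : Finset (Fin k))
        (Finset.univ_nonempty (α := Fin k)) ν
      have hνi0 : ν i0 = m := by rw [hm, hi0]
      have e1 : ν i0 + ∑ i ∈ Finset.univ.erase i0, ν i = δ := by
        rw [hδ]; exact Finset.add_sum_erase _ ν (Finset.mem_univ i0)
      have e2 : c i0 + ∑ i ∈ Finset.univ.erase i0, c i = ∑ i, c i := by
        exact Finset.add_sum_erase _ c (Finset.mem_univ i0)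
      have e3 : (k - 1) * (l + 1) ≤ (∑ i ∈ Finset.univ.erase i0, ν i) +
          ∑ i ∈ Finset.univ.erase i0, c i := by
        rw [← Finset.sum_add_distrib]
        calc (k - 1) * (l + 1) = ∑ _i ∈ Finset.univ.erase i0, (l + 1) := by
              rw [Finset.sum_const, Finset.card_erase_of_mem (Finset.mem_univ i0),
                Finset.card_univ, Fintype.card_fin, smul_eq_mul, mul_comm]
          _ ≤ _ := Finset.sum_le_sum (fun i _ => h1 i)
      have hY : (k - 1) * (l + 1) + (l + 1) = k * (l + 1) := by
        have hks : (k - 1) + 1 = k := Nat.succ_pred_eq_of_pos hk0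
        calc (k - 1) * (l + 1) + (l + 1) = ((k - 1) + 1) * (l + 1) := by ring
          _ = k * (l + 1) := by rw [hks]
      omega
    · omega
  -- the positions
  have hcard : Fintype.card (Fin n × Fin (l + 1)) = n * (l + 1) := by simp
  have hnl : n * (l + 1) = d + t := by
    have h1 : (n - k) + k = n := by omega
    have h2 : (n - k) * (l + 1) + k * (l + 1) = n * (l + 1) := by rw [← add_mul, h1]
    omega
  obtain ⟨P, -, hPcard⟩ := Finset.exists_subset_card_eq (s := (Finset.univ : Finset (Fin n × Fin (l + 1))))
    (n := t - 1) (by rw [Finset.card_univ, hcard]; omega)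
  -- the kernel of the shortening map has dimension ≥ 2
  have hrank : 2 ≤ Module.finrank F (LinearMap.ker (thetaMap G l c P)) := by
    have h5 := LinearMap.finrank_range_add_finrank_ker (thetaMap G l c P)
    have h6 : Module.finrank F (LinearMap.range (thetaMap G l c P))
        ≤ Module.finrank F (↥P → F) := Submodule.finrank_le _
    have h7 : Module.finrank F (↥P → F) = P.card := by simp [Module.finrank_pi]
    have h8 : Module.finrank F (∀ i, Fin (c i) → F) = ∑ i, c i := by
      rw [Module.finrank_pi_fintype]; simp
    omega
  -- two independent elements of the kernel
  set K := LinearMap.ker (thetaMap G l c P) with hK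
  let b := Module.finBasis F K
  have hfr : 2 ≤ Module.finrank F K := hrank
  let i0 : Fin (Module.finrank F K) := ⟨0, by omega⟩
  let i1 : Fin (Module.finrank F K) := ⟨1, by omega⟩
  have h01 : i0 ≠ i1 := by simp [i0, i1, Fin.ext_iff]
  set x0 : ∀ i, Fin (c i) → F := ↑(b i0) with hx0def
  set x1 : ∀ i, Fin (c i) → F := ↑(b i1) with hx1def
  have hker0 : thetaMap G l c P x0 = 0 := (b i0).2
  have hker1 : thetaMap G l c P x1 = 0 := (b i1).2
  have hpair : ∀ a e : F, a • x0 + e • x1 = 0 → a = 0 ∧ e = 0 := by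
    intro a e hae
    have hli := b.linearIndependent
    rw [linearIndependent_iff'] at hli
    have hsum : ∑ i ∈ ({i0, i1} : Finset _), (fun i => if i = i0 then a else e) i • b i = 0 := by
      rw [Finset.sum_insert (by simp [h01]), Finset.sum_singleton]
      have : ((a • b i0 + e • b i1 : K) : ∀ i, Fin (c i) → F) = a • x0 + e • x1 := by
        simp [hx0def, hx1def]
      have hz : (a • b i0 + e • b i1 : K) = 0 := by
        apply Subtype.coe_injective
        show ((a • b i0 + e • b i1 : K) : ∀ i, Fin (c i) → F) = ((0 : K) : ∀ i, Fin (c i) → F)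
        rw [this, hae]
        simp
      simpa [h01, Ne.symm h01] using hz
    refine ⟨?_, ?_⟩
    · have := hli {i0, i1} _ hsum i0 (by simp)
      simpa using this
    · have := hli {i0, i1} _ hsum i1 (by simp)
      simpa [Ne.symm h01] using this
  -- the q+1 projective combinations
  let A : Option F → F := fun o => o.elim 0 (fun _ => 1)
  let B : Option F → F := fun o => o.elim 1 id
  have hAB : ∀ o : Option F, ¬ (A o = 0 ∧ B o = 0) := by
    intro o ⟨h1, h2⟩
    cases o <;> simp [A, B] at h1 h2
  set g1 : Fin n × Fin (l + 1) → F := coefAt G l (iotaP c x0) with hg1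
  set g2 : Fin n × Fin (l + 1) → F := coefAt G l (iotaP c x1) with hg2
  have hcombo : ∀ (o : Option F) (p : Fin n × Fin (l + 1)),
      coefAt G l (iotaP c (A o • x0 + B o • x1)) p = A o * g1 p + B o * g2 p := by
    intro o p
    rw [iotaP_add, iotaP_smul, iotaP_smul, coefAt_add, coefAt_smul, coefAt_smul]
  have hune : ∀ o : Option F, iotaP c (A o • x0 + B o • x1) ≠ 0 := by
    intro o h
    have h0 := iotaP_eq_zero _ _ h
    have hfa := funext_iff.mp h0
    have := hpair (A o) (B o) h0
    exact hAB o this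
  -- degree bound for codewords
  have hdegs : ∀ (v : ∀ i, Fin (c i) → F) (j : Fin n),
      ((Matrix.vecMul (iotaP c v) G) j).natDegree ≤ l := by
    intro v j
    rw [vecMul_apply']
    apply Polynomial.natDegree_sum_le_of_forall_le
    intro i _
    by_cases h0 : c i = 0
    · rw [iotaP_zero_of c v i h0, zero_mul]
      simp
    · refine le_trans (Polynomial.natDegree_mul_le) ?_
      have hu := iotaP_natDegree_le c v i
      have hG := hGdeg i j
      have hci : c i = l + 1 - ν i := rfl
      omega
  -- weight = number of nonzero positions
  have hwt : ∀ v : ∀ i, Fin (c i) → F,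
      polyWt (Matrix.vecMul (iotaP c v) G) = (Finset.univ.filter
        (fun p : Fin n × Fin (l+1) => coefAt G l (iotaP c v) p ≠ 0)).card := by
    intro v
    rw [polyWt_eq_card l _ (hdegs v)]
    congr 1
  -- the support T
  set T : Finset (Fin n × Fin (l + 1)) :=
    Finset.univ.filter (fun p => g1 p ≠ 0 ∨ g2 p ≠ 0) with hT
  have hTP : ∀ p ∈ T, p ∉ P := by
    intro p hp hpP
    have h1 : g1 p = 0 := congrFun hker0 ⟨p, hpP⟩
    have h2 : g2 p = 0 := congrFun hker1 ⟨p, hpP⟩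
    rw [hT, Finset.mem_filter] at hp
    rcases hp.2 with h | h
    · exact h h1
    · exact h h2
  have hTcard : T.card ≤ d + 1 := by
    have hsub : T ⊆ Pᶜ := fun p hp => Finset.mem_compl.mpr (hTP p hp)
    have := Finset.card_le_card hsub
    rw [Finset.card_compl, hcard, hPcard] at this
    omega
  -- the filtered supports agree
  have hsub2 : ∀ o : Option F,
      (Finset.univ.filter (fun p : Fin n × Fin (l+1) =>
        coefAt G l (iotaP c (A o • x0 + B o • x1)) p ≠ 0))
      = T.filter (fun p => A o * g1 p + B o * g2 p ≠ 0) := by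
    intro o
    ext p
    simp only [Finset.mem_filter, Finset.mem_univ, true_and, hT, hcombo o p]
    constructor
    · intro h
      refine ⟨?_, h⟩
      by_contra hcon
      push_neg at hcon
      rw [hcon.1, hcon.2] at h
      simp at h
    · exact fun h => h.2
  have hlow : ∀ o : Option F, d ≤ (T.filter (fun p => A o * g1 p + B o * g2 p ≠ 0)).card := by
    intro o
    have h1 : d ≤ polyWt (Matrix.vecMul (iotaP c (A o • x0 + B o • x1)) G) :=
      hd.2 ⟨_, hune o, rfl⟩
    rw [hwt _, hsub2 o] at h1
    exact h1
  have hup : ∀ p ∈ T, (Finset.univ.filter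
      (fun o : Option F => A o * g1 p + B o * g2 p ≠ 0)).card ≤ q := by
    intro p hp
    have hex : ∃ o0 : Option F, A o0 * g1 p + B o0 * g2 p = 0 := by
      by_cases h2 : g2 p = 0
      · exact ⟨none, by simp [A, B, h2]⟩
      · refine ⟨some (-(g1 p) / g2 p), ?_⟩
        simp only [A, B, Option.elim, id_eq]
        field_simp
        ring
    obtain ⟨o0, ho0⟩ := hex
    have hsubset : Finset.univ.filter
        (fun o : Option F => A o * g1 p + B o * g2 p ≠ 0) ⊆ Finset.univ.erase o0 := by
      intro o ho
      refine Finset.mem_erase.mpr ⟨?_, Finset.mem_univ o⟩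
      intro h
      exact (Finset.mem_filter.mp ho).2 (h ▸ ho0)
    calc (Finset.univ.filter _).card ≤ (Finset.univ.erase o0).card :=
          Finset.card_le_card hsubset
      _ = Fintype.card (Option F) - 1 := by
          rw [Finset.card_erase_of_mem (Finset.mem_univ o0), Finset.card_univ]
      _ = q := by rw [Fintype.card_option, hq]; omega
  -- double counting
  have hdc : ∑ o : Option F, (T.filter (fun p => A o * g1 p + B o * g2 p ≠ 0)).card
      = ∑ p ∈ T, (Finset.univ.filter
        (fun o : Option F => A o * g1 p + B o * g2 p ≠ 0)).card := by
    simp_rw [Finset.card_filter]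
    exact Finset.sum_comm
  have hfinal1 : (q + 1) * d ≤ ∑ o : Option F,
      (T.filter (fun p => A o * g1 p + B o * g2 p ≠ 0)).card := by
    calc (q + 1) * d = ∑ _o : Option F, d := by
          rw [Finset.sum_const, Finset.card_univ, Fintype.card_option, hq, smul_eq_mul]
      _ ≤ _ := Finset.sum_le_sum (fun o _ => hlow o)
  have hfinal2 : ∑ p ∈ T, (Finset.univ.filter
      (fun o : Option F => A o * g1 p + B o * g2 p ≠ 0)).card ≤ (d + 1) * q := by
    calc ∑ p ∈ T, (Finset.univ.filter
        (fun o : Option F => A o * g1 p + B o * g2 p ≠ 0)).card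
        ≤ ∑ _p ∈ T, q := Finset.sum_le_sum hup
      _ = T.card * q := by rw [Finset.sum_const, smul_eq_mul]
      _ ≤ (d + 1) * q := Nat.mul_le_mul_right q hTcard
  have hineq : (q + 1) * d ≤ (d + 1) * q := by
    calc (q + 1) * d ≤ _ := hfinal1
      _ = _ := hdc
      _ ≤ (d + 1) * q := hfinal2
  have e1 : (q + 1) * d = q * d + d := by ring
  have e2 : (d + 1) * q = q * d + q := by ring
  omega
end

section
/- A convolutional code that is invariant under the ordinary cyclic shift is a block code: Let F be a finite field and let G ∈ F[z]^{k×n} (1 ≤ k < n) be right invertible with complexity δ (the maximal degree of its k×k minors). Suppose that for every u ∈ F[z]^k there exists u' ∈ F[z]^k such that u'G = ρ(uG), where ρ : F[z]^n → F[z]^n is the cyclic shift (v_0, v_1, …, v_{n-1}) ↦ (v_{n-1}, v_0, …, v_{n-2}) of the n coordinates. Then δ = 0, i.e., every k×k minor of G is a constant polynomial. -/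
open Polynomial Matrix

set_option linter.unusedSectionVars false

namespace CyclicShiftBlock

variable {F : Type*} [Field F] {n : ℕ} [NeZero n]

lemma npos : 0 < n := Nat.pos_of_ne_zero (NeZero.ne n)

lemma monicD {A : Type*} [CommRing A] [Nontrivial A] : (X ^ n - 1 : A[X]).Monic := by
  simpa using monic_X_pow_sub_C (1 : A) (NeZero.ne n)

lemma natDegD {A : Type*} [CommRing A] [Nontrivial A] : (X ^ n - 1 : A[X]).natDegree = n := by
  simpa using (natDegree_X_pow_sub_C (n := n) (r := (1:A)))

lemma degD {A : Type*} [CommRing A] [Nontrivial A] : (X ^ n - 1 : A[X]).degree = n := by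
  simpa using (degree_X_pow_sub_C (npos (n := n)) (1:A))

lemma modCongr {A : Type*} [CommRing A] [IsDomain A] {q a b : A[X]} (hq : q.Monic)
    (h : q ∣ (a - b)) : a %ₘ q = b %ₘ q := by
  have ha := modByMonic_add_div a q
  have hb := modByMonic_add_div b q
  have key : a %ₘ q - b %ₘ q = (a - b) - q * (a /ₘ q - b /ₘ q) := by
    ring_nf; linear_combination ha - hb
  by_contra hne
  have hdvd : q ∣ (a %ₘ q - b %ₘ q) := by
    rw [key]; exact dvd_sub h (Dvd.intro _ rfl)
  have hlt : (a %ₘ q - b %ₘ q).degree < q.degree :=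
    lt_of_le_of_lt (degree_sub_le _ _)
      (max_lt (degree_modByMonic_lt a hq) (degree_modByMonic_lt b hq))
  exact hne (sub_eq_zero.mp (eq_zero_of_dvd_of_degree_lt hdvd hlt))

lemma modSelfDvd {A : Type*} [CommRing A] {q p : A[X]} (hq : q.Monic) : q ∣ (p - p %ₘ q) := by
  refine ⟨p /ₘ q, ?_⟩
  linear_combination (modByMonic_add_div p q).symm

lemma modCmul {A : Type*} [CommRing A] [IsDomain A] {q : A[X]} (hq : q.Monic)
    (c : A) (p : A[X]) : (C c * p) %ₘ q = C c * (p %ₘ q) := by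
  have h1 : (C c * p) %ₘ q = (C c * (p %ₘ q)) %ₘ q := by
    apply modCongr hq
    have : C c * p - C c * (p %ₘ q) = C c * (p - p %ₘ q) := by ring
    rw [this]
    exact Dvd.dvd.mul_left (modSelfDvd hq) _
  rw [h1, (modByMonic_eq_self_iff hq).mpr]
  calc (C c * (p %ₘ q)).degree ≤ degree (C c) + degree (p %ₘ q) := degree_mul_le _ _
    _ ≤ 0 + degree (p %ₘ q) := add_le_add degree_C_le le_rfl
    _ = degree (p %ₘ q) := by rw [zero_add]
    _ < q.degree := degree_modByMonic_lt _ hq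

lemma modXmul {A : Type*} [CommRing A] [IsDomain A] {q : A[X]} (hq : q.Monic)
    (p : A[X]) : (X * p) %ₘ q = (X * (p %ₘ q)) %ₘ q := by
  apply modCongr hq
  have : X * p - X * (p %ₘ q) = X * (p - p %ₘ q) := by ring
  rw [this]
  exact Dvd.dvd.mul_left (modSelfDvd hq) _

/-- the coefficient-extraction map, after reduction mod `X^n - 1` -/
noncomputable def psi (n : ℕ) (p : Polynomial (Polynomial F)) : Fin n → Polynomial F :=
  fun i => (p %ₘ (X ^ n - 1)).coeff (i : ℕ)

/-- the polynomial associated to a vector -/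
noncomputable def phi {n : ℕ} (v : Fin n → Polynomial F) : Polynomial (Polynomial F) :=
  ∑ j : Fin n, Polynomial.C (v j) * X ^ (j : ℕ)

lemma phi_coeff {n : ℕ} (v : Fin n → Polynomial F) (t : ℕ) :
    (phi v).coeff t = if h : t < n then v ⟨t, h⟩ else 0 := by
  rw [phi, finset_sum_coeff]
  by_cases h : t < n
  · rw [dif_pos h]
    rw [Finset.sum_eq_single (⟨t, h⟩ : Fin n)]
    · simp [coeff_C_mul, coeff_X_pow]
    · intro j _ hj
      simp only [coeff_C_mul, coeff_X_pow]
      have : t ≠ (j : ℕ) := by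
        intro he; apply hj; apply Fin.ext; simp [he]
      simp [this]
    · intro hj; exact absurd (Finset.mem_univ _) hj
  · rw [dif_neg h]
    apply Finset.sum_eq_zero
    intro j _
    have : t ≠ (j : ℕ) := by omega
    simp [coeff_C_mul, coeff_X_pow, this]

lemma phi_coeff_fin {n : ℕ} (v : Fin n → Polynomial F) (i : Fin n) :
    (phi v).coeff (i : ℕ) = v i := by
  rw [phi_coeff, dif_pos i.isLt]

lemma phi_natDegree_lt {n : ℕ} (hn : 0 < n) (v : Fin n → Polynomial F) :
    (phi v).natDegree < n := by
  have h : (phi v).natDegree ≤ n - 1 := by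
    rw [natDegree_le_iff_coeff_eq_zero]
    intro N hN
    rw [phi_coeff, dif_neg (by omega)]
  omega

lemma phi_degree_lt {n : ℕ} (hn : 0 < n) (v : Fin n → Polynomial F) :
    (phi v).degree < (n : ℕ) := by
  rcases eq_or_ne (phi v) 0 with h | h
  · rw [h, degree_zero]; exact WithBot.bot_lt_coe n
  · rw [degree_eq_natDegree h]
    exact_mod_cast Nat.cast_lt.mpr (phi_natDegree_lt hn v)

lemma psi_phi (v : Fin n → Polynomial F) : psi n (phi v) = v := by
  funext i
  rw [psi, (modByMonic_eq_self_iff monicD).mpr (by rw [degD]; exact phi_degree_lt npos v),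
    phi_coeff_fin]

lemma psi_add (p q : Polynomial (Polynomial F)) : psi n (p + q) = psi n p + psi n q := by
  funext i; simp [psi, add_modByMonic]

lemma psi_zero : psi (F := F) n 0 = 0 := by
  funext i; simp [psi, zero_modByMonic]

lemma psi_Cmul (c : Polynomial F) (p : Polynomial (Polynomial F)) :
    psi n (Polynomial.C c * p) = c • psi n p := by
  funext i
  simp [psi, modCmul monicD, coeff_C_mul]

lemma psi_D : psi (F := F) n (X ^ n - 1) = 0 := by
  funext i
  have : (X ^ n - 1 : Polynomial (Polynomial F)) %ₘ (X ^ n - 1) = 0 :=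
    (modByMonic_eq_zero_iff_dvd monicD).mpr dvd_rfl
  simp [psi, this]

/-- self-mod for degree-< n polynomials, coefficientwise psi formula -/
lemma psi_of_natDegree_lt {p : Polynomial (Polynomial F)} (hp : p.natDegree < n) (i : Fin n) :
    psi n p i = p.coeff (i : ℕ) := by
  rw [psi, (modByMonic_eq_self_iff monicD).mpr]
  rw [degD]
  calc p.degree ≤ (p.natDegree : WithBot ℕ) := degree_le_natDegree
    _ < (n : ℕ) := by exact_mod_cast Nat.cast_lt.mpr hp

/-- the key shift computation: multiplying by X is the cyclic shift -/
lemma psi_Xmul (p : Polynomial (Polynomial F)) :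
    psi n (X * p) = fun i : Fin n => psi n p (i - 1) := by
  obtain ⟨n', rfl⟩ : ∃ n', n = n' + 1 := ⟨n - 1, by have := npos (n := n); omega⟩
  set N := n' + 1 with hN
  set d : Polynomial (Polynomial F) := X ^ N - 1 with hd
  set r := p %ₘ d with hr
  have hrdeg : r.degree < (N : ℕ) := by rw [hr, ← degD (A := Polynomial F) (n := N)]; exact degree_modByMonic_lt p monicD
  have hrnat : r.natDegree ≤ N - 1 := by
    rcases eq_or_ne r 0 with h | h
    · simp [h]
    · have := (degree_eq_natDegree h) ▸ hrdeg
      have : r.natDegree < N := by exact_mod_cast this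
      omega
  set c := r.coeff (N - 1) with hc
  have key : (X * p) %ₘ d = X * r - C c * d := by
    rw [modXmul monicD]
    have h1 : (X * r) %ₘ d = (X * r - C c * d) %ₘ d := by
      apply modCongr monicD
      have : X * r - (X * r - C c * d) = C c * d := by ring
      rw [this]; exact Dvd.dvd.mul_left dvd_rfl _
    rw [h1, (modByMonic_eq_self_iff monicD).mpr]
    rw [degD]
    rcases eq_or_ne (X * r - C c * d) 0 with h | h
    · rw [h, degree_zero]; exact WithBot.bot_lt_coe N
    · rw [degree_eq_natDegree h]
      have hcoeff : ∀ t : ℕ, N ≤ t → (X * r - C c * d).coeff t = 0 := by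
        intro t ht
        obtain ⟨t', rfl⟩ : ∃ t', t = t' + 1 := ⟨t - 1, by omega⟩
        rw [coeff_sub, coeff_X_mul, coeff_C_mul, hd]
        rcases eq_or_lt_of_le ht with he | hlt
        · have ht' : t' = N - 1 := by omega
          have : (X ^ N - 1 : Polynomial (Polynomial F)).coeff (t' + 1) = 1 := by
            rw [coeff_sub, coeff_X_pow, coeff_one, if_pos (by omega), if_neg (by omega)]
            ring
          rw [this, ht', ← hc, mul_one, sub_self]
        · have h1 : r.coeff t' = 0 := by
            apply coeff_eq_zero_of_natDegree_lt; omega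
          have h2 : (X ^ N - 1 : Polynomial (Polynomial F)).coeff (t' + 1) = 0 := by
            rw [coeff_sub, coeff_X_pow, coeff_one, if_neg (by omega), if_neg (by omega)]
            ring
          rw [h1, h2, mul_zero, sub_zero]
      have hle : (X * r - C c * d).natDegree ≤ N - 1 := by
        rw [natDegree_le_iff_coeff_eq_zero]
        intro t ht; exact hcoeff t (by omega)
      have hlt : (X * r - C c * d).natDegree < N := by omega
      exact_mod_cast Nat.cast_lt.mpr hlt
  funext i
  show ((X * p) %ₘ d).coeff (i : ℕ) = (p %ₘ d).coeff ((i - 1 : Fin N) : ℕ)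
  rw [key, coeff_sub, coeff_C_mul, Fin.coe_sub_one]
  by_cases hi : i = 0
  · rw [if_pos hi, hi]
    show (X * r).coeff 0 - c * d.coeff 0 = r.coeff n'
    have h1 : (X * r).coeff 0 = 0 := by
      rw [mul_coeff_zero, coeff_X_zero, zero_mul]
    have h2 : d.coeff 0 = -1 := by
      rw [hd, coeff_sub, coeff_X_pow, coeff_one, if_neg (by omega), if_pos rfl]; ring
    rw [h1, h2]
    have hcn : c = r.coeff n' := by simp [hc, hN]
    rw [hcn]
    ring
  · rw [if_neg hi]
    have hipos : 0 < (i : ℕ) := by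
      rcases Nat.eq_zero_or_pos (i : ℕ) with h | h
      · exact absurd (Fin.ext h) hi
      · exact h
    obtain ⟨t, ht⟩ : ∃ t, (i : ℕ) = t + 1 := ⟨(i : ℕ) - 1, by omega⟩
    rw [ht, coeff_X_mul]
    have h2 : d.coeff (t + 1) = 0 := by
      rw [hd, coeff_sub, coeff_X_pow, coeff_one, if_neg (by have := i.isLt; omega), if_neg (by omega)]
      ring
    rw [h2, mul_zero, sub_zero]
    congr 1
    try omega



section Mclosure

variable (M : Submodule (Polynomial F) (Fin n → Polynomial F))

lemma psi_mul_mem (hshiftM : ∀ v ∈ M, (fun i : Fin n => v (i - 1)) ∈ M)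
    (a p : Polynomial (Polynomial F)) (hp : psi n p ∈ M) : psi n (a * p) ∈ M := by
  induction a using Polynomial.induction_on' with
  | add f g hf hg => rw [add_mul, psi_add]; exact M.add_mem hf hg
  | monomial j c =>
    have hX : ∀ (j : ℕ), psi n (X ^ j * p) ∈ M := by
      intro j
      induction j with
      | zero => simpa using hp
      | succ j ih =>
        have h1 : X ^ (j+1) * p = X * (X ^ j * p) := by ring
        rw [h1, psi_Xmul]
        exact hshiftM _ ih
    have h2 : (monomial j c) * p = Polynomial.C c * (X ^ j * p) := by
      rw [← C_mul_X_pow_eq_monomial]; ring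
    rw [h2, psi_Cmul]
    exact M.smul_mem _ (hX j)

/-- the ideal generated by the code together with `X^n - 1` -/
noncomputable def Jideal : Ideal (Polynomial (Polynomial F)) :=
  Ideal.span ((phi '' (M : Set (Fin n → Polynomial F))) ∪ {X ^ n - 1})

lemma psi_mem_of_mem_J (hshiftM : ∀ v ∈ M, (fun i : Fin n => v (i - 1)) ∈ M)
    {p : Polynomial (Polynomial F)} (hp : p ∈ Jideal M) : psi n p ∈ M := by
  induction hp using Submodule.span_induction with
  | mem x hx =>
    rcases hx with hx | hx
    · obtain ⟨w, hw, rfl⟩ := hx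
      rw [psi_phi]; exact hw
    · simp only [Set.mem_singleton_iff] at hx
      rw [hx, psi_D]; exact M.zero_mem
  | zero => rw [psi_zero]; exact M.zero_mem
  | add x y hx hy ihx ihy => rw [psi_add]; exact M.add_mem ihx ihy
  | smul a x hx ih =>
    rw [smul_eq_mul]
    exact psi_mul_mem M hshiftM a x ih

end Mclosure

section Denominators

/-- clearing denominators for a polynomial over `RatFunc F` -/
lemma exists_denom (r : Polynomial (RatFunc F)) :
    ∃ e : Polynomial F, e ≠ 0 ∧ ∃ s : Polynomial (Polynomial F),
      s.map (algebraMap (Polynomial F) (RatFunc F)) =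
        Polynomial.C (algebraMap (Polynomial F) (RatFunc F) e) * r := by
  induction r using Polynomial.induction_on' with
  | add f g hf hg =>
    obtain ⟨e1, he1, s1, hs1⟩ := hf
    obtain ⟨e2, he2, s2, hs2⟩ := hg
    refine ⟨e1 * e2, mul_ne_zero he1 he2, Polynomial.C e2 * s1 + Polynomial.C e1 * s2, ?_⟩
    rw [Polynomial.map_add, Polynomial.map_mul, Polynomial.map_mul, map_C, map_C, hs1, hs2]
    simp only [_root_.map_mul]
    ring
  | monomial j a =>
    obtain ⟨⟨x, t⟩, hxt⟩ := IsLocalization.surj (nonZeroDivisors (Polynomial F)) a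
    refine ⟨(t : Polynomial F), nonZeroDivisors.ne_zero t.2, monomial j x, ?_⟩
    rw [Polynomial.map_monomial, C_mul_monomial]
    congr 1
    rw [mul_comm, hxt]

/-- clearing denominators for membership in the extended ideal -/
lemma exists_denom_mem (I : Ideal (Polynomial (Polynomial F)))
    {y : Polynomial (RatFunc F)}
    (hy : y ∈ Ideal.map (Polynomial.mapRingHom (algebraMap (Polynomial F) (RatFunc F))) I) :
    ∃ e : Polynomial F, e ≠ 0 ∧ ∃ v ∈ I,
      v.map (algebraMap (Polynomial F) (RatFunc F)) =
        Polynomial.C (algebraMap (Polynomial F) (RatFunc F) e) * y := by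
  have hy' : y ∈ Ideal.span
      ((Polynomial.mapRingHom (algebraMap (Polynomial F) (RatFunc F))) ''
        (I : Set (Polynomial (Polynomial F)))) := hy
  clear hy
  induction hy' using Submodule.span_induction with
  | mem x hx =>
    obtain ⟨v, hv, rfl⟩ := hx
    exact ⟨1, one_ne_zero, v, hv, by simp⟩
  | zero => exact ⟨1, one_ne_zero, 0, I.zero_mem, by simp⟩
  | add x y hx hy ihx ihy =>
    obtain ⟨ex, hex, vx, hvx, hx2⟩ := ihx
    obtain ⟨ey, hey, vy, hvy, hy2⟩ := ihy
    refine ⟨ex * ey, mul_ne_zero hex hey,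
      Polynomial.C ey * vx + Polynomial.C ex * vy,
      I.add_mem (I.mul_mem_left _ hvx) (I.mul_mem_left _ hvy), ?_⟩
    rw [Polynomial.map_add, Polynomial.map_mul, Polynomial.map_mul, map_C, map_C, hx2, hy2]
    simp only [_root_.map_mul]
    ring
  | smul a x hx ih =>
    obtain ⟨ex, hex, vx, hvx, hx2⟩ := ih
    obtain ⟨ea, hea, sa, hsa⟩ := exists_denom a
    refine ⟨ea * ex, mul_ne_zero hea hex, sa * vx, I.mul_mem_left _ hvx, ?_⟩
    rw [smul_eq_mul, Polynomial.map_mul, hsa, hx2]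
    simp only [_root_.map_mul]
    ring

end Denominators



section Integrality

variable (F)

/-- an element of `F[z]` integral over `F` is a constant -/
lemma natDegree_eq_zero_of_isIntegral {p : Polynomial F} (hp : IsIntegral F p) :
    p.natDegree = 0 := by
  obtain ⟨f, hf, hev⟩ := hp
  have hev' : f.comp p = 0 := by
    rw [Polynomial.comp]
    rw [Polynomial.algebraMap_eq (R := F)] at hev
    exact hev
  rcases Nat.eq_zero_or_pos f.natDegree with h0 | hpos
  · exfalso
    have : f = 1 := hf.natDegree_eq_zero.mp h0
    rw [this, one_comp] at hev'
    exact one_ne_zero hev'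
  · have := natDegree_comp (p := f) (q := p)
    rw [hev', natDegree_zero] at this
    rcases Nat.mul_eq_zero.mp this.symm with h | h
    · omega
    · exact h

/-- coefficients of `(X - r)`-products with integral roots are integral -/
lemma coeff_prod_integral {L : Type*} [Field L] [Algebra F L] (s : Multiset L)
    (hs : ∀ r ∈ s, IsIntegral F r) (i : ℕ) :
    ((s.map fun r => X - Polynomial.C r).prod).coeff i ∈ integralClosure F L := by
  induction s using Multiset.induction_on generalizing i with
  | empty =>
    simp only [Multiset.map_zero, Multiset.prod_zero, coeff_one]
    split_ifs
    · exact Subalgebra.one_mem _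
    · exact Subalgebra.zero_mem _
  | cons a s ih =>
    have ha : IsIntegral F a := hs a (Multiset.mem_cons_self a s)
    have hs' : ∀ r ∈ s, IsIntegral F r := fun r hr => hs r (Multiset.mem_cons_of_mem hr)
    rw [Multiset.map_cons, Multiset.prod_cons]
    set P := (s.map fun r => X - Polynomial.C r).prod with hP
    have hexp : (X - Polynomial.C a) * P = X * P - Polynomial.C a * P := by ring
    rw [hexp, coeff_sub, coeff_C_mul]
    apply Subalgebra.sub_mem
    · rcases i with _ | i
      · have : (X * P).coeff 0 = 0 := by
          rw [mul_coeff_zero, coeff_X_zero, zero_mul]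
        rw [this]
        exact Subalgebra.zero_mem _
      · rw [coeff_X_mul]
        exact ih hs' i
    · exact Subalgebra.mul_mem _ ha (ih hs' i)

/-- coefficients of a monic divisor of `X^n - 1` over `RatFunc F` lie in `F` -/
lemma coeffs_in_F {h : Polynomial (RatFunc F)} (hm : h.Monic)
    (hdvd : h ∣ (X ^ n - 1 : Polynomial (RatFunc F))) (i : ℕ) :
    ∃ a : F, algebraMap F (RatFunc F) a = h.coeff i := by
  set K := RatFunc F
  set dK : Polynomial K := X ^ n - 1 with hdK
  have hdKm : dK.Monic := monicD
  have hdK0 : dK ≠ 0 := hdKm.ne_zero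
  set L := dK.SplittingField
  have hsplits : Splits (h.map (algebraMap K L)) :=
    (SplittingField.splits dK).of_dvd (Polynomial.map_ne_zero hdK0) (Polynomial.map_dvd _ hdvd)
  set hL : Polynomial L := h.map (algebraMap K L) with hhL
  have hLm : hL.Monic := hm.map _
  have hLsplits : Splits hL := hsplits
  have hLprod : hL = (hL.roots.map fun a => X - Polynomial.C a).prod :=
    hLsplits.eq_prod_roots_of_monic hLm
  have hroots : ∀ r ∈ hL.roots, IsIntegral F r := by
    intro r hr
    have hrr : hL.eval r = 0 := isRoot_of_mem_roots hr
    have hdvdL : hL ∣ (dK.map (algebraMap K L)) := Polynomial.map_dvd _ hdvd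
    have hev : (dK.map (algebraMap K L)).eval r = 0 := by
      obtain ⟨c, hc⟩ := hdvdL
      rw [hc, eval_mul, hrr, zero_mul]
    have hrn : r ^ n - 1 = 0 := by
      have hmap : (dK.map (algebraMap K L)) = X ^ n - 1 := by
        show Polynomial.map (algebraMap K L) (X ^ n - 1) = X ^ n - 1
        simp [Polynomial.map_sub, Polynomial.map_pow]
      rw [hmap] at hev
      simpa using hev
    refine ⟨X ^ n - 1, monicD, ?_⟩
    have : Polynomial.eval₂ (algebraMap F L) r ((X : Polynomial F) ^ n - 1) = r ^ n - 1 := by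
      simp
    rw [this, hrn]
  -- coefficients of hL are integral over F
  have hcoeffL : IsIntegral F (hL.coeff i) := by
    have := coeff_prod_integral F hL.roots hroots i
    rw [← hLprod] at this
    exact this
  -- descend to h.coeff i in K
  have hKint : IsIntegral F (h.coeff i) := by
    have hinj : Function.Injective (algebraMap K L) := (algebraMap K L).injective
    rw [← isIntegral_algebraMap_iff hinj]
    have : algebraMap K L (h.coeff i) = hL.coeff i := (coeff_map _ _).symm
    rw [this]
    exact hcoeffL
  -- h.coeff i is integral over F[z], hence lies in F[z]
  have hPint : IsIntegral (Polynomial F) (h.coeff i) := hKint.tower_top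
  obtain ⟨p, hp⟩ := IsIntegrallyClosed.isIntegral_iff.mp hPint
  have hpint : IsIntegral F p := by
    have hinj : Function.Injective (algebraMap (Polynomial F) K) := IsFractionRing.injective _ _
    rw [← isIntegral_algebraMap_iff hinj, hp]
    exact hKint
  have hdeg : p.natDegree = 0 := natDegree_eq_zero_of_isIntegral F hpint
  refine ⟨p.coeff 0, ?_⟩
  have hpC : p = Polynomial.C (p.coeff 0) := eq_C_of_natDegree_eq_zero hdeg
  rw [IsScalarTower.algebraMap_eq F (Polynomial F) K]
  show algebraMap (Polynomial F) K (algebraMap F (Polynomial F) (p.coeff 0)) = h.coeff i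
  rw [Polynomial.algebraMap_eq, ← hpC, hp]

end Integrality



section Conv

/-- coefficient formula for products with a constant-coefficient polynomial -/
lemma conv_coeff (g : Polynomial F) {m : ℕ} (c : Fin m → Polynomial F) (i : ℕ) :
    ((∑ j : Fin m, Polynomial.C (c j) * X ^ (j : ℕ)) *
        (g.map (Polynomial.C : F →+* Polynomial F))).coeff i
      = ∑ j : Fin m, c j * Polynomial.C ((X ^ (j : ℕ) * g).coeff i) := by
  rw [Finset.sum_mul, finset_sum_coeff]
  apply Finset.sum_congr rfl
  intro j _
  rw [mul_assoc, coeff_C_mul]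
  congr 1
  have : (X ^ (j : ℕ) * g).map (Polynomial.C : F →+* Polynomial F)
      = X ^ (j : ℕ) * g.map (Polynomial.C : F →+* Polynomial F) := by
    rw [Polynomial.map_mul, Polynomial.map_pow, map_X]
  rw [← this, coeff_map]

lemma sum_coeff_extract {m : ℕ} (c : Fin m → Polynomial F) (j₀ : Fin m) :
    (∑ j : Fin m, Polynomial.C (c j) * X ^ (j : ℕ)).coeff (j₀ : ℕ) = c j₀ := by
  rw [finset_sum_coeff]
  rw [Finset.sum_eq_single j₀]
  · simp [coeff_C_mul, coeff_X_pow]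
  · intro j _ hj
    have : ((j₀ : ℕ)) ≠ (j : ℕ) := fun he => hj (Fin.ext he.symm)
    simp [coeff_C_mul, coeff_X_pow, this]
  · intro hj; exact absurd (Finset.mem_univ _) hj

/-- the constant rows built from `g` are linearly independent over `F[z]` -/
lemma rows_indep {g : Polynomial F} (hg : g.Monic) {m : ℕ} (hmn : m + g.natDegree = n)
    (c : Fin m → Polynomial F)
    (hc : ∀ i : Fin n, ∑ j : Fin m, c j * Polynomial.C ((X ^ (j : ℕ) * g).coeff (i : ℕ)) = 0) :
    ∀ j, c j = 0 := by
  rcases Nat.eq_zero_or_pos m with hm0 | hmpos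
  · intro j; exact absurd j.isLt (by omega)
  set gP : Polynomial (Polynomial F) := g.map (Polynomial.C : F →+* Polynomial F) with hgP
  have hgPm : gP.Monic := hg.map _
  have hgPdeg : gP.natDegree = g.natDegree := hg.natDegree_map _
  set s : Polynomial (Polynomial F) := ∑ j : Fin m, Polynomial.C (c j) * X ^ (j : ℕ) with hs
  have hsdeg : s.natDegree ≤ m - 1 := by
    apply natDegree_sum_le_of_forall_le
    intro j _
    calc (Polynomial.C (c j) * X ^ (j : ℕ)).natDegree
        ≤ (Polynomial.C (c j)).natDegree + (X ^ (j : ℕ) : Polynomial (Polynomial F)).natDegree :=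
          natDegree_mul_le
      _ ≤ m - 1 := by
          rw [natDegree_C, natDegree_X_pow]
          have := j.isLt
          omega
  have hts : (s * gP).natDegree ≤ n - 1 := by
    calc (s * gP).natDegree ≤ s.natDegree + gP.natDegree := natDegree_mul_le
      _ ≤ (m - 1) + g.natDegree := by rw [hgPdeg]; omega
      _ ≤ n - 1 := by omega
  have ht0 : s * gP = 0 := by
    apply Polynomial.ext
    intro i
    rcases Nat.lt_or_ge i n with hi | hi
    · rw [hs, conv_coeff]
      have := hc ⟨i, hi⟩
      simpa using this
    · rw [coeff_zero]
      apply coeff_eq_zero_of_natDegree_lt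
      have := npos (n := n)
      omega
  have hs0 : s = 0 := by
    rcases mul_eq_zero.mp ht0 with h | h
    · exact h
    · exact absurd h hgPm.ne_zero
  intro j
  have := sum_coeff_extract c j
  rw [← hs, hs0, coeff_zero] at this
  exact this.symm

end Conv



section Main

/-- The core structure theorem: a shift-invariant, saturated submodule of `F[z]^n`
is generated by the "constant" rows coming from a monic divisor `g` of `X^n - 1`. -/
lemma mainCore (M : Submodule (Polynomial F) (Fin n → Polynomial F))
    (hshiftM : ∀ v ∈ M, (fun i : Fin n => v (i - 1)) ∈ M)
    (htor : ∀ (c : Polynomial F) (v : Fin n → Polynomial F), c ≠ 0 → c • v ∈ M → v ∈ M) :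
    ∃ (m : ℕ) (g : Polynomial F), g.Monic ∧ m + g.natDegree = n ∧
      (∀ j : Fin m, (fun i : Fin n => Polynomial.C ((X ^ (j : ℕ) * g).coeff (i : ℕ))) ∈ M) ∧
      (∀ v ∈ M, ∃ c : Fin m → Polynomial F,
        ∀ i : Fin n, v i = ∑ j : Fin m, c j * Polynomial.C ((X ^ (j : ℕ) * g).coeff (i : ℕ))) := by
  classical
  set K := RatFunc F
  set θ : Polynomial (Polynomial F) →+* Polynomial K :=
    Polynomial.mapRingHom (algebraMap (Polynomial F) K) with hθ
  set J : Ideal (Polynomial (Polynomial F)) := Jideal M with hJ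
  set J' : Ideal (Polynomial K) := J.map θ with hJ'
  -- the generator of the extended ideal
  have hdJ : (X ^ n - 1 : Polynomial (Polynomial F)) ∈ J :=
    Ideal.subset_span (Or.inr rfl)
  have hdJ' : (X ^ n - 1 : Polynomial K) ∈ J' := by
    have := Ideal.mem_map_of_mem θ hdJ
    have hθd : θ (X ^ n - 1 : Polynomial (Polynomial F)) = (X ^ n - 1 : Polynomial K) := by
      simp [hθ, Polynomial.map_sub, Polynomial.map_pow]
    rwa [hθd] at this
  obtain ⟨h₀, hh₀⟩ := (IsPrincipalIdealRing.principal J').principal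
  have hd_dvd : h₀ ∣ (X ^ n - 1 : Polynomial K) := by
    rw [hh₀] at hdJ'
    exact (Ideal.mem_span_singleton).mp hdJ'
  have hdK0 : (X ^ n - 1 : Polynomial K) ≠ 0 := (monicD).ne_zero
  have h₀ne : h₀ ≠ 0 := by
    rintro rfl
    exact hdK0 (zero_dvd_iff.mp hd_dvd)
  set h : Polynomial K := h₀ * Polynomial.C (h₀.leadingCoeff)⁻¹ with hh
  have hm : h.Monic := monic_mul_leadingCoeff_inv h₀ne
  have hJ'h : J' = Ideal.span {h} := by
    rw [hh₀, hh]
    exact (Ideal.span_singleton_mul_right_unit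
      (IsUnit.map Polynomial.C (isUnit_iff_ne_zero.mpr (inv_ne_zero
        (leadingCoeff_ne_zero.mpr h₀ne)))) h₀).symm
  have hdvd : h ∣ (X ^ n - 1 : Polynomial K) := by
    rw [hJ'h] at hdJ'
    exact (Ideal.mem_span_singleton).mp hdJ'
  -- the monic lift over F
  have hlift : h ∈ Polynomial.lifts (algebraMap F K) := by
    rw [lifts_iff_coeff_lifts]
    intro i
    obtain ⟨a, ha⟩ := coeffs_in_F F hm hdvd i
    exact ⟨a, ha⟩
  obtain ⟨g, hgmap, hgdeg, hgm⟩ := lifts_and_degree_eq_and_monic hlift hm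
  have hgnat : g.natDegree = h.natDegree := by
    rw [← hgmap]
    exact (hgm.natDegree_map _).symm
  have hhn : h.natDegree ≤ n := by
    have := natDegree_le_of_dvd hdvd hdK0
    rwa [natDegD] at this
  -- common setup
  set m := n - g.natDegree with hmdef
  set gP : Polynomial (Polynomial F) := g.map (Polynomial.C : F →+* Polynomial F) with hgP
  have hgPm : gP.Monic := hgm.map _
  have hgPdeg : gP.natDegree = g.natDegree := hgm.natDegree_map _
  have hkey : gP.map (algebraMap (Polynomial F) K) = h := by
    rw [hgP, Polynomial.map_map]
    have hcomp : (algebraMap (Polynomial F) K).comp (Polynomial.C : F →+* Polynomial F)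
        = algebraMap F K := by
      rw [IsScalarTower.algebraMap_eq F (Polynomial F) K, Polynomial.algebraMap_eq]
    rw [hcomp, hgmap]
  have hinj : Function.Injective (algebraMap (Polynomial F) K) :=
    IsFractionRing.injective _ _
  have hmapinj : Function.Injective
      (Polynomial.map (algebraMap (Polynomial F) K)) := Polynomial.map_injective _ hinj
  refine ⟨m, g, hgm, by omega, ?_, ?_⟩
  · -- part 1 : the constant rows lie in M
    intro j
    set u : Polynomial (Polynomial F) := X ^ (j : ℕ) * gP with hu
    have hunat : u.natDegree = (j : ℕ) + g.natDegree := by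
      rw [hu, (monic_X_pow _).natDegree_mul hgPm, natDegree_X_pow, hgPdeg]
    have humem : θ u ∈ J' := by
      have hθu : θ u = X ^ (j : ℕ) * h := by
        simp only [hθ, coe_mapRingHom, hu, Polynomial.map_mul, Polynomial.map_pow,
          Polynomial.map_X]
        rw [hkey]
      rw [hJ'h, hθu]
      exact (Ideal.mem_span_singleton).mpr (dvd_mul_left h _)
    obtain ⟨e, he, v, hv, hveq⟩ := exists_denom_mem J humem
    have hvu : v = Polynomial.C e * u := by
      apply hmapinj
      rw [hveq]
      show _ = (Polynomial.C e * u).map (algebraMap (Polynomial F) K)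
      rw [Polynomial.map_mul, map_C]
      rfl
    have hpsiu : e • psi n u ∈ M := by
      rw [← psi_Cmul, ← hvu]
      exact psi_mem_of_mem_J M hshiftM hv
    have hpsiuM : psi n u ∈ M := htor e _ he hpsiu
    have hpsieq : psi n u = fun i : Fin n =>
        Polynomial.C ((X ^ (j : ℕ) * g).coeff (i : ℕ)) := by
      funext i
      rw [psi_of_natDegree_lt (by rw [hunat]; have := j.isLt; omega)]
      have : u = (X ^ (j : ℕ) * g).map (Polynomial.C : F →+* Polynomial F) := by
        rw [Polynomial.map_mul, Polynomial.map_pow, map_X, ← hgP]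
      rw [this, coeff_map]
    rwa [hpsieq] at hpsiuM
  · -- part 2 : every element of M decomposes over the constant rows
    intro v hv
    have hphiJ : phi v ∈ J := Ideal.subset_span (Or.inl ⟨v, hv, rfl⟩)
    have hphiJ' : θ (phi v) ∈ J' := Ideal.mem_map_of_mem θ hphiJ
    have hhdvd : h ∣ θ (phi v) := by
      rw [hJ'h] at hphiJ'
      exact (Ideal.mem_span_singleton).mp hphiJ'
    have hr0 : phi v %ₘ gP = 0 := by
      apply hmapinj
      rw [Polynomial.map_modByMonic _ hgPm, hkey]
      show (phi v).map (algebraMap (Polynomial F) K) %ₘ h = Polynomial.map _ 0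
      rw [Polynomial.map_zero, (modByMonic_eq_zero_iff_dvd hm).mpr]
      exact hhdvd
    have hfac : phi v = gP * (phi v /ₘ gP) := by
      have h2 := modByMonic_add_div (phi v) gP
      rw [hr0, zero_add] at h2
      exact h2.symm
    rcases eq_or_ne (phi v) 0 with hv0 | hv0
    · refine ⟨0, fun i => ?_⟩
      rw [← phi_coeff_fin v i, hv0, coeff_zero]
      simp
    · set q := phi v /ₘ gP with hq
      have hqne : q ≠ 0 := by
        intro hq0
        rw [hq0, mul_zero] at hfac
        exact hv0 hfac
      have hqlt : q.natDegree < m := by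
        have h1 : (phi v).natDegree = gP.natDegree + q.natDegree := by
          rw [hfac, natDegree_mul hgPm.ne_zero hqne]
        have h2 : (phi v).natDegree < n := phi_natDegree_lt npos v
        rw [hgPdeg] at h1
        omega
      have hqsum : q = ∑ j : Fin m, Polynomial.C (q.coeff (j : ℕ)) * X ^ (j : ℕ) := by
        conv_lhs => rw [as_sum_range' q m hqlt]
        rw [← Fin.sum_univ_eq_sum_range (fun j => (monomial j) (q.coeff j)) m]
        apply Finset.sum_congr rfl
        intro j _
        rw [C_mul_X_pow_eq_monomial]
      refine ⟨fun j => q.coeff (j : ℕ), fun i => ?_⟩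
      have hmain : (phi v).coeff (i : ℕ)
          = ∑ j : Fin m, q.coeff (j : ℕ) * Polynomial.C ((X ^ (j : ℕ) * g).coeff (i : ℕ)) := by
        conv_lhs => rw [hfac, mul_comm, hqsum]
        exact conv_coeff g (fun j => q.coeff (j : ℕ)) (i : ℕ)
      rw [← phi_coeff_fin v i]
      exact hmain

end Main



lemma smul_vecMul' {k n : ℕ} (c : Polynomial F) (v : Fin k → Polynomial F)
    (A : Matrix (Fin k) (Fin n) (Polynomial F)) :
    Matrix.vecMul (c • v) A = c • Matrix.vecMul v A := by
  funext j
  simp [Matrix.vecMul, dotProduct, Finset.mul_sum, mul_assoc]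

lemma row_mul_eq {m k n : ℕ} (B : Matrix (Fin m) (Fin k) (Polynomial F))
    (G : Matrix (Fin k) (Fin n) (Polynomial F)) (j : Fin m) :
    (B * G) j = Matrix.vecMul (B j) G := by
  funext i
  simp [Matrix.mul_apply, Matrix.vecMul, dotProduct]

end CyclicShiftBlock

open CyclicShiftBlock

/-- **A convolutional code invariant under the ordinary cyclic shift is a block code.**
Let `F` be a finite field and `G ∈ F[z]^{k×n}` (`1 ≤ k < n`) right invertible.
Suppose that for every `u ∈ F[z]^k` there is `u' ∈ F[z]^k` with `u'G = ρ(uG)`, where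
`ρ(v)_j = v_{j-1}` (indices mod `n`) is the cyclic shift.  Then the complexity of `G`
is zero, i.e., every `k×k` minor of `G` is a constant polynomial. -/
theorem cyclic_shift_invariant_implies_block_code
    {F : Type*} [Field F] [Fintype F] {k n : ℕ} [NeZero n]
    (hk : 1 ≤ k) (hkn : k < n)
    (G : Matrix (Fin k) (Fin n) (Polynomial F))
    (hright : ∃ H : Matrix (Fin n) (Fin k) (Polynomial F), G * H = 1)
    (hshift : ∀ u : Fin k → Polynomial F, ∃ u' : Fin k → Polynomial F,
      Matrix.vecMul u' G = fun j : Fin n => Matrix.vecMul u G (j - 1)) :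
    ∀ f : Fin k ↪ Fin n, ((G.submatrix id ⇑f).det).natDegree = 0 := by
  classical
  intro f
  obtain ⟨H, hGH⟩ := hright
  set K := RatFunc F
  set M : Submodule (Polynomial F) (Fin n → Polynomial F) :=
    LinearMap.range (Matrix.vecMulLinear G) with hMdef
  -- shift invariance of M
  have hshiftM : ∀ v ∈ M, (fun i : Fin n => v (i - 1)) ∈ M := by
    rintro v ⟨u, rfl⟩
    obtain ⟨u', hu'⟩ := hshift u
    refine ⟨u', ?_⟩
    rw [Matrix.vecMulLinear_apply, hu']
    funext j
    rw [Matrix.vecMulLinear_apply]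
  -- torsion freeness of the quotient
  have htor : ∀ (c : Polynomial F) (v : Fin n → Polynomial F), c ≠ 0 → c • v ∈ M → v ∈ M := by
    intro c v hc hcv
    obtain ⟨u, hu⟩ := hcv
    rw [Matrix.vecMulLinear_apply] at hu
    have h2 : Matrix.vecMul (Matrix.vecMul u G) H = u := by
      rw [Matrix.vecMul_vecMul, hGH, Matrix.vecMul_one]
    rw [hu] at h2
    have h3 : c • v = c • Matrix.vecMul (Matrix.vecMul v H) G := by
      rw [← hu, ← h2, smul_vecMul', smul_vecMul']
    have h4 : v = Matrix.vecMul (Matrix.vecMul v H) G := by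
      funext j
      have := congrFun h3 j
      simp only [Pi.smul_apply, smul_eq_mul] at this
      exact mul_left_cancel₀ hc this
    exact ⟨Matrix.vecMul v H, by rw [Matrix.vecMulLinear_apply]; exact h4.symm⟩
  -- rows of G lie in M
  have hrow : ∀ i0 : Fin k, (fun j => G i0 j) ∈ M := by
    intro i0
    refine ⟨Pi.single i0 1, ?_⟩
    rw [Matrix.vecMulLinear_apply, Matrix.single_vecMul]
    funext j
    rw [one_smul]; rfl
  obtain ⟨m, g, hgm, hmn, part1, part2⟩ := mainCore M hshiftM htor
  -- the constant generator matrix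
  set G0R : Matrix (Fin m) (Fin n) (Polynomial F) :=
    Matrix.of fun (jj : Fin m) (ii : Fin n) =>
      Polynomial.C ((X ^ (jj : ℕ) * g).coeff (ii : ℕ)) with hG0R
  -- B : expresses the constant rows in terms of G
  have hB : ∀ jj : Fin m, ∃ u : Fin k → Polynomial F,
      Matrix.vecMul u G = fun i : Fin n => Polynomial.C ((X ^ (jj : ℕ) * g).coeff (i : ℕ)) := by
    intro jj
    obtain ⟨u, hu⟩ := part1 jj
    exact ⟨u, by rw [← Matrix.vecMulLinear_apply]; exact hu⟩
  set Bmat : Matrix (Fin m) (Fin k) (Polynomial F) :=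
    Matrix.of fun jj => (hB jj).choose with hBmat
  have hBG : Bmat * G = G0R := by
    apply Matrix.ext
    intro jj ii
    have h1 := congrFun ((hB jj).choose_spec) ii
    have h0 := congrFun (row_mul_eq Bmat G jj) ii
    rw [h0]
    exact h1
  -- A : expresses the rows of G in terms of the constant rows
  have hA : ∀ i0 : Fin k, ∃ c : Fin m → Polynomial F,
      ∀ ii : Fin n, G i0 ii = ∑ jj : Fin m, c jj * Polynomial.C ((X ^ (jj : ℕ) * g).coeff (ii : ℕ)) :=
    fun i0 => part2 _ (hrow i0)
  set Amat : Matrix (Fin k) (Fin m) (Polynomial F) :=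
    Matrix.of fun i0 => (hA i0).choose with hAmat
  have hAG0 : Amat * G0R = G := by
    apply Matrix.ext
    intro i0 ii
    rw [Matrix.mul_apply]
    exact ((hA i0).choose_spec ii).symm
  -- A * B = 1
  have hABG : (Amat * Bmat) * G = G := by rw [Matrix.mul_assoc, hBG, hAG0]
  have hAB : Amat * Bmat = 1 := by
    have h1 : (Amat * Bmat) * (G * H) = G * H := by rw [← Matrix.mul_assoc, hABG]
    rw [hGH, Matrix.mul_one] at h1
    exact h1
  -- B * A = 1, via linear independence of the constant rows
  have hBAG0 : (Bmat * Amat) * G0R = G0R := by rw [Matrix.mul_assoc, hAG0, hBG]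
  have hBA : Bmat * Amat = 1 := by
    apply Matrix.ext
    intro jj ll
    have hc : ∀ ii : Fin n,
        ∑ l : Fin m, ((Bmat * Amat) jj l - (1 : Matrix (Fin m) (Fin m) (Polynomial F)) jj l) *
          Polynomial.C ((X ^ (l : ℕ) * g).coeff (ii : ℕ)) = 0 := by
      intro ii
      have e1 : ∑ l : Fin m, (Bmat * Amat) jj l * Polynomial.C ((X ^ (l : ℕ) * g).coeff (ii : ℕ))
          = ((Bmat * Amat) * G0R) jj ii := by
        rw [Matrix.mul_apply]
        rfl
      have e2 : ∑ l : Fin m, (1 : Matrix (Fin m) (Fin m) (Polynomial F)) jj l *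
            Polynomial.C ((X ^ (l : ℕ) * g).coeff (ii : ℕ))
          = ((1 : Matrix (Fin m) (Fin m) (Polynomial F)) * G0R) jj ii := by
        rw [Matrix.mul_apply]
        rfl
      simp only [sub_mul, Finset.sum_sub_distrib, e1, e2, hBAG0, Matrix.one_mul, sub_self]
    have := rows_indep hgm hmn _ hc ll
    have h2 : (Bmat * Amat) jj ll = (1 : Matrix (Fin m) (Fin m) (Polynomial F)) jj ll := by
      have h3 := sub_eq_zero.mp this
      exact h3
    exact h2
  -- k = m
  set AK := Amat.map (algebraMap (Polynomial F) K) with hAK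
  set BK := Bmat.map (algebraMap (Polynomial F) K) with hBK
  have hABK : AK * BK = 1 := by
    rw [hAK, hBK, ← Matrix.map_mul, hAB]
    exact Matrix.map_one _ (map_zero _) (map_one _)
  have hBAK : BK * AK = 1 := by
    rw [hAK, hBK, ← Matrix.map_mul, hBA]
    exact Matrix.map_one _ (map_zero _) (map_one _)
  have hkm : k = m := by
    have e : (Fin m → K) ≃ₗ[K] (Fin k → K) :=
      LinearEquiv.ofLinear (Matrix.mulVecLin AK) (Matrix.mulVecLin BK)
        (by rw [← Matrix.mulVecLin_mul, hABK, Matrix.mulVecLin_one])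
        (by rw [← Matrix.mulVecLin_mul, hBAK, Matrix.mulVecLin_one])
    have := e.finrank_eq
    rw [Module.finrank_fin_fun, Module.finrank_fin_fun] at this
    omega
  set esq : Fin k ≃ Fin m := finCongr hkm with hesq
  set Asq := Amat.submatrix id ⇑esq with hAsq
  set G0sq := G0R.submatrix ⇑esq id with hG0sq
  set Bsq := Bmat.submatrix ⇑esq id with hBsq
  have hsq : Asq * G0sq = G := by
    rw [hAsq, hG0sq, Matrix.submatrix_mul_equiv Amat G0R id esq id, hAG0,
      Matrix.submatrix_id_id]
  have hABsq : Asq * Bsq = 1 := by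
    rw [hAsq, hBsq, Matrix.submatrix_mul_equiv Amat Bmat id esq id, hAB]
    apply Matrix.ext
    intro a b
    simp [Matrix.submatrix, Matrix.one_apply]
  have hdetu : IsUnit Asq.det :=
    IsUnit.of_mul_eq_one Bsq.det (by rw [← Matrix.det_mul, hABsq, Matrix.det_one])
  -- final computation of the minor
  have hfact : G.submatrix id ⇑f = Asq * G0sq.submatrix id ⇑f := by
    have h2 := Matrix.submatrix_mul_equiv Asq G0sq id (Equiv.refl (Fin k)) ⇑f
    simp only [Equiv.coe_refl, Matrix.submatrix_id_id] at h2
    rw [← hsq, ← h2]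
  set NF : Matrix (Fin k) (Fin k) F :=
    Matrix.of fun ii jj => ((X ^ ((esq ii : Fin m) : ℕ) * g).coeff ((f jj : Fin n) : ℕ)) with hNF
  have hCmat : G0sq.submatrix id ⇑f = NF.map ⇑(Polynomial.C : F →+* Polynomial F) := by
    apply Matrix.ext
    intro a b
    rfl
  have hdet : (G.submatrix id ⇑f).det = Asq.det * Polynomial.C NF.det := by
    rw [hfact, Matrix.det_mul, hCmat]
    congr 1
    rw [RingHom.map_det, RingHom.mapMatrix_apply]
  rw [hdet]
  have hle : (Asq.det * Polynomial.C NF.det).natDegree ≤ 0 := by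
    calc (Asq.det * Polynomial.C NF.det).natDegree
        ≤ Asq.det.natDegree + (Polynomial.C NF.det).natDegree := natDegree_mul_le
      _ ≤ 0 := by rw [natDegree_eq_zero_of_isUnit hdetu, natDegree_C]
  omega
end

section
/- Generalized Singleton bound: Let F_q be a finite field, let G ∈ F_q[z]^{k×n} (1 ≤ k < n) be right invertible with complexity δ (the maximal degree of its k×k minors), and let d = min{ wt(uG) : u ∈ F_q[z]^k, u ≠ 0 } be the free distance of the convolutional code generated by G. Then d ≤ (n-k)(⌊δ/k⌋+1) + δ + 1. -/
open Polynomial Matrix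

section Aux
variable {F : Type*} [Field F]


lemma coeff_prod_eq {ι : Type*} (s : Finset ι) (f : ι → F[X]) (d : ι → ℕ)
    (h : ∀ i ∈ s, (f i).natDegree ≤ d i) :
    (∏ i ∈ s, f i).coeff (∑ i ∈ s, d i) = ∏ i ∈ s, (f i).coeff (d i) := by
  classical
  induction s using Finset.induction_on with
  | empty => simp
  | insert _ _ ha ih =>
    rename_i a s
    rw [Finset.prod_insert ha, Finset.sum_insert ha, Finset.prod_insert ha,
      coeff_mul_add_eq_of_natDegree_le (h a (Finset.mem_insert_self a s))
        ((natDegree_prod_le s f).trans (Finset.sum_le_sum fun i hi => h i (Finset.mem_insert_of_mem hi))),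
      ih fun i hi => h i (Finset.mem_insert_of_mem hi)]


lemma exists_dep_of_minors_zero {k n : ℕ} (M : Matrix (Fin k) (Fin n) F)
    (h : ∀ f : Fin k ↪ Fin n, (M.submatrix id ⇑f).det = 0) :
    ∃ w : Fin k → F, w ≠ 0 ∧ vecMul w M = 0 := by
  classical
  by_contra hcon
  push_neg at hcon
  have hinj : Function.Injective M.vecMulLinear := by
    rw [← LinearMap.ker_eq_bot, LinearMap.ker_eq_bot']
    intro w hw
    by_contra hw0
    exact hcon w hw0 (by simpa [Matrix.vecMulLinear] using hw)
  have hrankT : Mᵀ.rank = k := by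
    rw [Matrix.rank]
    rw [Matrix.mulVecLin_transpose]
    rw [LinearMap.finrank_range_of_inj hinj]
    simp [Module.finrank_fin_fun]
  have hspan : Submodule.span F (Set.range Mᵀ) = ⊤ := by
    apply Submodule.eq_top_of_finrank_eq
    rw [show Set.range Mᵀ = Set.range M.col from rfl, ← Matrix.rank_eq_finrank_span_cols]
    rw [show M.rank = Mᵀ.rank from (Matrix.rank_transpose M).symm, hrankT, Module.finrank_fin_fun]
  obtain ⟨b, hbsub, hbspan, hbind⟩ := exists_linearIndependent F (Set.range Mᵀ)
  rw [hspan] at hbspan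
  have hbfin : b.Finite := hbind.setFinite
  letI : Fintype b := hbfin.fintype
  have hbbasis : Module.Basis b F (Fin k → F) :=
    Module.Basis.mk hbind (by rw [Subtype.range_coe]; exact hbspan.symm ▸ le_rfl)
  have hcard : Fintype.card b = k := by
    rw [← Module.finrank_eq_card_basis hbbasis, Module.finrank_fin_fun]
  let e : Fin k ≃ b := (Fintype.equivFinOfCardEq hcard).symm
  have hpick : ∀ x : b, ∃ j : Fin n, Mᵀ j = (x : Fin k → F) := fun x => hbsub x.2
  choose g hg using hpick
  have hginj : Function.Injective g := fun x y hxy => by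
    apply Subtype.ext; rw [← hg x, ← hg y, hxy]
  let f : Fin k ↪ Fin n := ⟨fun i => g (e i), fun i j hij => e.injective (hginj hij)⟩
  have : (M.submatrix id ⇑f).det ≠ 0 := by
    have hind : LinearIndependent F fun i : Fin k => (M.submatrix id ⇑f)ᵀ i := by
      have : (fun i : Fin k => (M.submatrix id ⇑f)ᵀ i)
          = fun i => ((e i : Fin k → F)) := by
        funext i; rw [← hg (e i)]; rfl
      rw [this]
      exact hbind.comp (fun i => e i) e.injective
    have hu := Matrix.linearIndependent_cols_iff_isUnit.mp hind
    intro h0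
    have := (Matrix.isUnit_iff_isUnit_det _).mp hu
    rw [h0] at this
    exact this.ne_zero rfl
  exact this (h f)


lemma rowDeg_le {k n : ℕ} (G : Matrix (Fin k) (Fin n) F[X]) (i : Fin k) (j : Fin n) :
    (G i j).natDegree ≤ rowDeg G i :=
  Finset.le_sup (f := fun j => (G i j).natDegree) (Finset.mem_univ j)

lemma step {k n : ℕ} (G G' : Matrix (Fin k) (Fin n) F[X]) (δ : ℕ)
    (hGright : ∃ H : Matrix (Fin n) (Fin k) F[X], G * H = 1)
    (hminor : ∀ f : Fin k ↪ Fin n, ((G'.submatrix id ⇑f).det).natDegree ≤ δ)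
    (htrans : ∀ u : Fin k → F[X], u ≠ 0 → ∃ u', u' ≠ 0 ∧ vecMul u G' = vecMul u' G)
    (hbig : δ < ∑ i, rowDeg G' i) :
    ∃ G'' : Matrix (Fin k) (Fin n) F[X],
      (∀ f : Fin k ↪ Fin n, ((G''.submatrix id ⇑f).det).natDegree ≤ δ) ∧
      (∀ u : Fin k → F[X], u ≠ 0 → ∃ u', u' ≠ 0 ∧ vecMul u G'' = vecMul u' G) ∧
      ∑ i, rowDeg G'' i < ∑ i, rowDeg G' i := by
  classical
  set ν : Fin k → ℕ := rowDeg G' with hν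
  set Gb : Matrix (Fin k) (Fin n) F := Matrix.of fun i j => (G' i j).coeff (ν i) with hGb
  -- Claim A : all k×k minors of the leading coefficient matrix vanish
  have hminor0 : ∀ f : Fin k ↪ Fin n, ((Gb.submatrix id ⇑f).det) = 0 := by
    intro f
    have h1 : ((G'.submatrix id ⇑f).det).coeff (∑ i, ν i) = (Gb.submatrix id ⇑f).det := by
      rw [Matrix.det_apply', Matrix.det_apply', finset_sum_coeff]
      simp only [Matrix.submatrix_apply, id_eq]
      refine Finset.sum_congr rfl fun σ _ => ?_
      rw [show ((Equiv.Perm.sign σ : ℤ) : F[X]) = C ((Equiv.Perm.sign σ : ℤ) : F) by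
        rw [Polynomial.C_eq_intCast], coeff_C_mul]
      congr 1
      rw [show (∑ i, ν i) = ∑ i, ν (σ i) from (Equiv.sum_comp σ ν).symm,
        coeff_prod_eq Finset.univ _ (fun i => ν (σ i))
          (fun i _ => rowDeg_le G' (σ i) (f i))]
      simp [hGb]
    have h2 : ((G'.submatrix id ⇑f).det).coeff (∑ i, ν i) = 0 :=
      coeff_eq_zero_of_natDegree_lt (lt_of_le_of_lt (hminor f) hbig)
    rw [← h1, h2]
  obtain ⟨w, hw0, hwG⟩ := exists_dep_of_minors_zero Gb hminor0
  -- pick r with w r ≠ 0 maximizing ν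
  have hsne : (Finset.univ.filter fun i => w i ≠ 0).Nonempty := by
    obtain ⟨i, hi⟩ := Function.ne_iff.mp hw0
    exact ⟨i, by simpa using hi⟩
  obtain ⟨r, hrmem, hrmax⟩ := Finset.exists_max_image _ ν hsne
  have hwr : w r ≠ 0 := by simpa using hrmem
  have hmax : ∀ i, w i ≠ 0 → ν i ≤ ν r := fun i hi => hrmax i (by simpa using hi)
  set v : Fin k → F[X] := fun l => C (w l) * X ^ (ν r - ν l) with hv
  set newrow : Fin n → F[X] := fun j => ∑ l, v l * G' l j with hnewrow
  set G'' := G'.updateRow r newrow with hG''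
  have hvr : v r = C (w r) := by simp [hv]
  -- submatrix structure
  have hrowsub : ∀ f : Fin k ↪ Fin n, G''.submatrix id ⇑f
      = (G'.submatrix id ⇑f).updateRow r (∑ l, v l • (G'.submatrix id ⇑f) l) := by
    intro f
    ext i j
    by_cases hi : i = r
    · subst hi
      simp [hG'', hnewrow, Matrix.updateRow_self, Matrix.submatrix_apply,
        Finset.sum_apply, smul_eq_mul]
    · simp [hG'', Matrix.updateRow_ne hi, Matrix.submatrix_apply]
  -- minors of G''
  have hminor'' : ∀ f : Fin k ↪ Fin n, ((G''.submatrix id ⇑f).det).natDegree ≤ δ := by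
    intro f
    rw [hrowsub f, Matrix.det_updateRow_sum (G'.submatrix id ⇑f) r v]
    rw [hvr, smul_eq_mul]
    exact le_trans (natDegree_C_mul_le _ _) (hminor f)
  -- transfer for G''
  have htrans'' : ∀ u : Fin k → F[X], u ≠ 0 →
      ∃ u', u' ≠ 0 ∧ vecMul u G'' = vecMul u' G := by
    intro u hu
    set Tu : Fin k → F[X] := fun l => (if l = r then 0 else u l) + u r * v l with hTu
    have hTu0 : Tu ≠ 0 := by
      intro h0
      have hr' : Tu r = 0 := congrFun h0 r
      simp only [hTu, eq_self_iff_true, if_true, zero_add, hvr] at hr'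
      have hur : u r = 0 := by
        rcases mul_eq_zero.mp hr' with h | h
        · exact h
        · exact absurd h (by simp [hwr])
      apply hu
      funext l
      by_cases hl : l = r
      · rw [hl]; exact hur
      · have := congrFun h0 l
        simpa [hTu, hl, hur] using this
    have hveq : vecMul u G'' = vecMul Tu G' := by
      funext j
      simp only [Matrix.vecMul, dotProduct]
      have hXn : ∑ i : Fin k, u r * v i * G' i j = u r * newrow j := by
        rw [hnewrow, Finset.mul_sum]
        exact Finset.sum_congr rfl fun i _ => by ring
      have lhs : ∀ i : Fin k, u i * G'' i j
          = u i * G' i j + (if i = r then u r * newrow j - u r * G' r j else 0) := by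
        intro i
        by_cases hi : i = r
        · subst hi
          simp only [hG'', Matrix.updateRow_self, eq_self_iff_true, if_true]
          ring
        · simp [hG'', Matrix.updateRow_ne hi, hi]
      have rhs : ∀ i : Fin k, Tu i * G' i j
          = u i * G' i j + (u r * v i * G' i j - if i = r then u r * G' r j else 0) := by
        intro i
        by_cases hi : i = r
        · subst hi
          simp only [hTu, eq_self_iff_true, if_true, zero_add, hvr]
          ring
        · simp only [hTu, hi, if_false]
          ring
      rw [Finset.sum_congr rfl fun i _ => lhs i, Finset.sum_congr rfl fun i _ => rhs i,
        Finset.sum_add_distrib, Finset.sum_add_distrib, Finset.sum_sub_distrib, hXn,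
        Finset.sum_ite_eq' Finset.univ r (fun _ => u r * newrow j - u r * G' r j),
        Finset.sum_ite_eq' Finset.univ r (fun _ => u r * G' r j),
        if_pos (Finset.mem_univ r), if_pos (Finset.mem_univ r)]
    obtain ⟨u', hu', heq⟩ := htrans Tu hTu0
    exact ⟨u', hu', hveq.trans heq⟩
  refine ⟨G'', hminor'', htrans'', ?_⟩
  -- degree decrease
  have hcoeff : ∀ j, (newrow j).coeff (ν r) = 0 := by
    intro j
    rw [hnewrow, finset_sum_coeff]
    have : ∀ l, (v l * G' l j).coeff (ν r) = w l * Gb l j := by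
      intro l
      by_cases hwl : w l = 0
      · simp [hv, hwl]
      · have hle : ν l ≤ ν r := hmax l hwl
        obtain ⟨a, ha⟩ : ∃ a, ν r = ν l + a := ⟨ν r - ν l, (Nat.add_sub_cancel' hle).symm⟩
        rw [hv, mul_assoc, coeff_C_mul, show ν r - ν l = a by omega, ha, coeff_X_pow_mul]
        simp [hGb]
    rw [Finset.sum_congr rfl fun l _ => this l]
    exact congrFun hwG j
  have hdeg : ∀ j, (newrow j).natDegree ≤ ν r := by
    intro j
    rw [hnewrow]
    apply natDegree_sum_le_of_forall_le
    intro l _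
    by_cases hwl : w l = 0
    · simp [hv, hwl]
    · have hle : ν l ≤ ν r := hmax l hwl
      calc (v l * G' l j).natDegree ≤ (v l).natDegree + (G' l j).natDegree :=
            natDegree_mul_le
        _ ≤ (ν r - ν l) + ν l := by
            gcongr
            · exact le_trans (natDegree_C_mul_le _ _) (by simp)
            · exact rowDeg_le G' l j
        _ = ν r := Nat.sub_add_cancel hle
  have hlt : ∀ j, newrow j ≠ 0 → (newrow j).natDegree < ν r := by
    intro j hj
    rcases lt_or_eq_of_le (hdeg j) with h | h
    · exact h
    · exfalso
      apply hj
      have : (newrow j).leadingCoeff = 0 := by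
        rw [Polynomial.leadingCoeff, h]; exact hcoeff j
      exact leadingCoeff_eq_zero.mp this
  by_cases hall : ∀ j, newrow j = 0
  · -- contradiction with right invertibility of G
    exfalso
    obtain ⟨H, hH⟩ := hGright
    have hone : (Pi.single r 1 : Fin k → F[X]) ≠ 0 := by
      intro h0
      have := congrFun h0 r
      simp at this
    obtain ⟨u', hu', heq⟩ := htrans'' (Pi.single r 1) hone
    have hz : vecMul (Pi.single r 1 : Fin k → F[X]) G'' = 0 := by
      funext j
      simp only [Matrix.vecMul, dotProduct, Pi.single_apply, Pi.zero_apply]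
      rw [Finset.sum_congr rfl (fun i _ => by rw [ite_mul, one_mul, zero_mul]),
        Finset.sum_ite_eq' Finset.univ r (fun i => G'' i j), if_pos (Finset.mem_univ r)]
      rw [hG'', Matrix.updateRow_self]
      exact hall j
    rw [hz] at heq
    have : u' = 0 := by
      have := congrArg (fun x => vecMul x H) heq.symm
      simpa [Matrix.vecMul_vecMul, hH] using this
    exact hu' this
  · push_neg at hall
    obtain ⟨j₀, hj₀⟩ := hall
    have hνr : 1 ≤ ν r := lt_of_le_of_lt (Nat.zero_le _) (hlt j₀ hj₀)
    have hrow'' : rowDeg G'' r ≤ ν r - 1 := by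
      apply Finset.sup_le
      intro j _
      have : G'' r j = newrow j := by rw [hG'', Matrix.updateRow_self]
      rw [this]
      by_cases hj : newrow j = 0
      · simp [hj]
      · exact Nat.le_sub_one_of_lt (hlt j hj)
    have hothers : ∀ i, i ≠ r → rowDeg G'' i = ν i := by
      intro i hi
      apply Finset.sup_congr rfl
      intro j _
      rw [hG'', Matrix.updateRow_ne hi]
    rw [← Finset.sum_erase_add _ _ (Finset.mem_univ r),
      ← Finset.sum_erase_add _ (fun i => ν i) (Finset.mem_univ r)]
    have : ∑ i ∈ Finset.univ.erase r, rowDeg G'' i = ∑ i ∈ Finset.univ.erase r, ν i :=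
      Finset.sum_congr rfl fun i hi => hothers i (Finset.ne_of_mem_erase hi)
    rw [this]
    have : rowDeg G'' r < ν r := lt_of_le_of_lt hrow'' (by omega)
    omega

lemma reduce {k n : ℕ} (G : Matrix (Fin k) (Fin n) F[X]) (δ : ℕ)
    (hGright : ∃ H : Matrix (Fin n) (Fin k) F[X], G * H = 1) :
    ∀ N (G' : Matrix (Fin k) (Fin n) F[X]),
      (∀ f : Fin k ↪ Fin n, ((G'.submatrix id ⇑f).det).natDegree ≤ δ) →
      (∀ u : Fin k → F[X], u ≠ 0 → ∃ u', u' ≠ 0 ∧ vecMul u G' = vecMul u' G) →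
      ∑ i, rowDeg G' i ≤ N →
      ∃ G'' : Matrix (Fin k) (Fin n) F[X],
        (∀ u : Fin k → F[X], u ≠ 0 → ∃ u', u' ≠ 0 ∧ vecMul u G'' = vecMul u' G) ∧
        ∑ i, rowDeg G'' i ≤ δ := by
  intro N
  induction N with
  | zero => exact fun G' _ ht hs => ⟨G', ht, le_trans hs (Nat.zero_le δ)⟩
  | succ N ih =>
    intro G' hm ht hs
    by_cases hle : ∑ i, rowDeg G' i ≤ δ
    · exact ⟨G', ht, hle⟩
    · obtain ⟨G'', hm'', ht'', hlt⟩ := step G G' δ hGright hm ht (lt_of_not_ge hle)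
      exact ih G'' hm'' ht'' (by omega)

end Aux

/-- **Generalized Singleton bound.**
Let `F_q` be a finite field, `G ∈ F_q[z]^{k×n}` (`1 ≤ k < n`) right invertible with
complexity `δ`, and let `d` be the free distance of the convolutional code generated
by `G`.  Then `d ≤ (n-k)(⌊δ/k⌋+1) + δ + 1`. -/
theorem generalized_singleton_bound
    {F : Type*} [Field F] [Fintype F] {k n : ℕ}
    (hk : 1 ≤ k) (hkn : k < n)
    (G : Matrix (Fin k) (Fin n) (Polynomial F))
    (hright : ∃ H : Matrix (Fin n) (Fin k) (Polynomial F), G * H = 1)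
    (δ : ℕ) (hδ : δ = complexity G)
    (d : ℕ)
    (hd : IsLeast {w : ℕ | ∃ u : Fin k → Polynomial F,
      u ≠ 0 ∧ w = polyWt (Matrix.vecMul u G)} d) :
    d ≤ (n - k) * (δ / k + 1) + δ + 1 := by
  classical
  have hminorG : ∀ f : Fin k ↪ Fin n, ((G.submatrix id ⇑f).det).natDegree ≤ δ := by
    intro f
    rw [hδ]
    exact Finset.le_sup (f := fun f : Fin k ↪ Fin n => ((G.submatrix id ⇑f).det).natDegree)
      (Finset.mem_univ f)
  obtain ⟨G', htrans, hsum⟩ := reduce G δ hright (∑ i, rowDeg G i) G hminorG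
    (fun u hu => ⟨u, hu, rfl⟩) le_rfl
  obtain ⟨m, hm⟩ : ∃ m, m = δ / k := ⟨_, rfl⟩
  rw [← hm]
  obtain ⟨c, hcdef⟩ : ∃ c : Fin k → ℕ, ∀ i, c i = m + 1 - rowDeg G' i := ⟨_, fun _ => rfl⟩
  obtain ⟨K, hK⟩ : ∃ K, K = ∑ i, c i := ⟨_, rfl⟩
  -- numeric facts
  have hδk : δ < k * (m + 1) := by
    have h1 := Nat.div_add_mod δ k
    have h2 := Nat.mod_lt δ (show 0 < k by omega)
    have h3 : k * (m + 1) = k * (δ / k) + k := by rw [hm]; ring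
    omega
  have hkK : k * (m + 1) ≤ δ + K := by
    have h1 : k * (m + 1) = ∑ _i : Fin k, (m + 1) := by
      rw [Finset.sum_const, Finset.card_univ, Fintype.card_fin, smul_eq_mul, mul_comm]
    have h2 : ∀ i : Fin k, (m + 1) ≤ rowDeg G' i + c i := by
      intro i; rw [hcdef i]; omega
    calc k * (m + 1) = ∑ _i : Fin k, (m + 1) := h1
      _ ≤ ∑ i, (rowDeg G' i + c i) := Finset.sum_le_sum fun i _ => h2 i
      _ = (∑ i, rowDeg G' i) + ∑ i, c i := Finset.sum_add_distrib
      _ ≤ δ + K := by omega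
  have hK1 : 1 ≤ K := by
    have h := lt_of_lt_of_le hδk hkK
    omega
  have hKle : K ≤ k * (m + 1) := by
    have h2 : ∀ i : Fin k, c i ≤ m + 1 := by intro i; rw [hcdef i]; omega
    calc K = ∑ i, c i := hK
      _ ≤ ∑ _i : Fin k, (m + 1) := Finset.sum_le_sum fun i _ => h2 i
      _ = k * (m + 1) := by
        rw [Finset.sum_const, Finset.card_univ, Fintype.card_fin, smul_eq_mul, mul_comm]
  -- choose the vanishing positions
  have hcardP : Fintype.card (Fin n × Fin (m + 1)) = n * (m + 1) := by simp
  obtain ⟨S, -, hScard⟩ := Finset.exists_subset_card_eq (s := (Finset.univ : Finset (Fin n × Fin (m + 1)))) (n := K - 1) (by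
      rw [Finset.card_univ, hcardP]
      have h3 : k * (m+1) ≤ n * (m+1) := Nat.mul_le_mul_right _ (le_of_lt hkn)
      exact le_trans (Nat.sub_le K 1) (le_trans hKle h3))
  -- the coefficient matrix and a kernel element
  set Mc : Matrix ((Σ i : Fin k, Fin (c i))) (↥S) F :=
    Matrix.of (fun q p => ((X ^ (q.2 : ℕ) * G' q.1 p.1.1).coeff (p.1.2 : ℕ))) with hMc
  have hnotinj : ¬ Function.Injective Mc.vecMulLinear := by
    intro hinj
    have hle := LinearMap.finrank_le_finrank_of_injective hinj
    rw [Module.finrank_pi, Module.finrank_pi] at hle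
    simp only [Fintype.card_sigma, Fintype.card_fin, Fintype.card_coe] at hle
    rw [← hK, hScard] at hle
    omega
  obtain ⟨a1, a2, heq12, hne12⟩ : ∃ a1 a2, Mc.vecMulLinear a1 = Mc.vecMulLinear a2 ∧ a1 ≠ a2 := by
    by_contra hcon
    push_neg at hcon
    exact hnotinj fun a1 a2 h => hcon a1 a2 h
  obtain ⟨a, ha⟩ : ∃ a, a = a1 - a2 := ⟨_, rfl⟩
  have ha0 : a ≠ 0 := by rw [ha]; exact sub_ne_zero_of_ne hne12
  have haker : Mc.vecMulLinear a = 0 := by rw [ha, map_sub, heq12, sub_self]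
  -- the message vector
  obtain ⟨u, hudef⟩ : ∃ u : Fin k → F[X],
      ∀ i, u i = ∑ t : Fin (c i), C (a ⟨i, t⟩) * X ^ (t : ℕ) := ⟨_, fun _ => rfl⟩
  have hucoeff : ∀ (i : Fin k) (t : Fin (c i)), (u i).coeff (t : ℕ) = a ⟨i, t⟩ := by
    intro i t
    rw [hudef i, finset_sum_coeff]
    rw [Finset.sum_congr rfl (fun t' _ => show (C (a ⟨i, t'⟩) * X ^ (t' : ℕ)).coeff (t : ℕ)
        = if t = t' then a ⟨i, t'⟩ else 0 from by
      rw [coeff_C_mul, coeff_X_pow]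
      by_cases h : t = t'
      · subst h; simp
      · rw [if_neg h, if_neg (fun hc => h (Fin.val_injective hc)), mul_zero])]
    rw [Finset.sum_ite_eq Finset.univ t (fun t' => a ⟨i, t'⟩), if_pos (Finset.mem_univ t)]
  have hu0 : u ≠ 0 := by
    intro h0
    apply ha0
    funext q
    have h2 := hucoeff q.1 q.2
    rw [congrFun h0 q.1] at h2
    simp only [Polynomial.coeff_zero, Pi.zero_apply] at h2
    rw [Pi.zero_apply]
    exact h2.symm
  -- bridge : coefficients of the codeword are given by Mc
  have hbridge : ∀ (p : ↥S), (vecMul u G' p.1.1).coeff (p.1.2 : ℕ)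
      = Mc.vecMulLinear a p := by
    intro p
    rw [Matrix.vecMulLinear_apply]
    show (vecMul u G' p.1.1).coeff (p.1.2 : ℕ) = ∑ q, a q * Mc q p
    rw [← Finset.univ_sigma_univ, Finset.sum_sigma]
    simp only [Matrix.vecMul, dotProduct]
    rw [finset_sum_coeff]
    refine Finset.sum_congr rfl fun i _ => ?_
    rw [hudef i, Finset.sum_mul, finset_sum_coeff]
    refine Finset.sum_congr rfl fun t _ => ?_
    rw [mul_assoc, coeff_C_mul]
    rfl
  have hker : ∀ p : Fin n × Fin (m + 1), p ∈ S → (vecMul u G' p.1).coeff (p.2 : ℕ) = 0 := by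
    intro p hp
    have h := hbridge ⟨p, hp⟩
    rw [haker] at h
    simpa using h
  -- degree bound on the codeword
  have hdeg : ∀ j, (vecMul u G' j).natDegree ≤ m := by
    intro j
    show (∑ i, u i * G' i j).natDegree ≤ m
    apply natDegree_sum_le_of_forall_le
    intro i _
    by_cases hzero : u i = 0
    · rw [hzero, zero_mul]; simp
    · have hci : c i ≠ 0 := by
        intro h0
        apply hzero
        rw [hudef i]
        haveI : IsEmpty (Fin (c i)) := by rw [h0]; infer_instance
        rw [Finset.univ_eq_empty, Finset.sum_empty]
      have hνm : rowDeg G' i ≤ m := by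
        have := hcdef i
        omega
      have hud : (u i).natDegree ≤ m - rowDeg G' i := by
        rw [hudef i]
        apply natDegree_sum_le_of_forall_le
        intro t _
        refine le_trans (natDegree_C_mul_le _ _) ?_
        rw [natDegree_X_pow]
        have h1 := t.isLt
        have h2 := hcdef i
        omega
      calc (u i * G' i j).natDegree ≤ (u i).natDegree + (G' i j).natDegree :=
            natDegree_mul_le
        _ ≤ (m - rowDeg G' i) + rowDeg G' i := by
            have := rowDeg_le G' i j
            omega
        _ = m := by omega
  -- weight count
  set A : Finset (Fin n × Fin (m + 1)) :=
    Finset.univ.filter (fun p => (vecMul u G' p.1).coeff (p.2 : ℕ) ≠ 0) with hA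
  have hwt : polyWt (vecMul u G') = A.card := by
    rw [polyWt, Finset.card_eq_sum_card_fiberwise (f := Prod.fst) (s := A)
      (t := Finset.univ) (fun x _ => Finset.mem_univ _)]
    refine Finset.sum_congr rfl fun j _ => ?_
    refine Finset.card_bij (fun s hs => ((j, ⟨s, by
      have h1 : s ∈ (vecMul u G' j).support := hs
      exact Nat.lt_succ_of_le (le_trans (le_natDegree_of_ne_zero
        (Polynomial.mem_support_iff.mp h1)) (hdeg j))⟩) : Fin n × Fin (m+1)))
      ?_ ?_ ?_
    · intro s hs
      rw [Finset.mem_filter]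
      constructor
      · rw [hA, Finset.mem_filter]
        exact ⟨Finset.mem_univ _, Polynomial.mem_support_iff.mp hs⟩
      · rfl
    · intro s1 hs1 s2 hs2 h
      exact congrArg (fun p : Fin n × Fin (m+1) => (p.2 : ℕ)) h
    · rintro ⟨p1, p2⟩ hp
      rw [Finset.mem_filter] at hp
      obtain ⟨hpA, hp1⟩ := hp
      rw [hA, Finset.mem_filter] at hpA
      have hp1' : p1 = j := hp1
      subst hp1'
      refine ⟨(p2 : ℕ), ?_, ?_⟩
      · rw [Polynomial.mem_support_iff]
        exact hpA.2
      · exact Prod.ext rfl (Fin.ext rfl)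
  -- disjointness and final count
  have hdisj : Disjoint A S := by
    rw [Finset.disjoint_left]
    intro p hpA hpS
    rw [hA, Finset.mem_filter] at hpA
    exact hpA.2 (hker p hpS)
  have hcount : A.card + S.card ≤ n * (m + 1) := by
    rw [← Finset.card_union_of_disjoint hdisj]
    calc (A ∪ S).card ≤ (Finset.univ : Finset (Fin n × Fin (m+1))).card :=
          Finset.card_le_univ _
      _ = n * (m + 1) := by rw [Finset.card_univ, hcardP]
  -- transfer and conclude
  obtain ⟨u', hu', hueq⟩ := htrans u hu0
  have hd2 : d ≤ polyWt (vecMul u' G) := hd.2 ⟨u', hu', rfl⟩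
  rw [← hueq, hwt] at hd2
  have hsplit : (n - k) * (m + 1) + k * (m + 1) = n * (m + 1) := by
    rw [← add_mul, Nat.sub_add_cancel (le_of_lt hkn)]
  rw [hScard] at hcount
  generalize hX1 : (n - k) * (m + 1) = X1 at hsplit ⊢
  generalize hX2 : k * (m + 1) = X2 at hsplit hkK
  generalize hX3 : n * (m + 1) = X3 at hsplit hcount
  omega
end

section
/- A convolutional code is determined by its polynomial part: Let F be a finite field, F((z)) the field of formal Laurent series over F, and let G, G' ∈ F[z]^{k×n} both be right invertible (i.e., each has a polynomial right inverse). Then { uG : u ∈ F((z))^k } = { uG' : u ∈ F((z))^k } if and only if { uG : u ∈ F[z]^k } = { uG' : u ∈ F[z]^k }. -/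
/-!
The code `{uA}` is contained in the code `{uB}` exactly when `A = MB` for some matrix `M`: the
rows of `M` are coordinates of the rows of `A`. If `BH = 1`, such an `M` is forced to be `AH`,
so the inclusion is the matrix identity `A = AHB`. Since `F[z] → F((z))` is injective, this
identity holds over `F[z]` iff it holds over `F((z))`.
-/

open Polynomial Matrix

/-- The canonical ring embedding of polynomials into formal Laurent series. -/
noncomputable def polyToLaurent (F : Type*) [Field F] :
    Polynomial F →+* LaurentSeries F :=
  (HahnSeries.ofPowerSeries ℤ F).comp Polynomial.coeToPowerSeries.ringHom

theorem polyToLaurent_injective (F : Type*) [Field F] :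
    Function.Injective (polyToLaurent F) :=
  HahnSeries.ofPowerSeries_injective.comp (Polynomial.coe_injective F)

namespace Matrix

variable {R : Type*} [Semiring R] {l m n : Type*} [Fintype l]

theorem range_vecMul_subset_range_vecMul_iff [Fintype m] [DecidableEq m] (A : Matrix m n R)
    (B : Matrix l n R) :
    Set.range (· ᵥ* A) ⊆ Set.range (· ᵥ* B) ↔ ∃ M : Matrix m l R, A = M * B := by
  constructor
  · intro hAB
    choose M hM using fun i => hAB ⟨Pi.single i 1, single_one_vecMul i A⟩
    exact ⟨of M, funext fun i => (hM i).symm⟩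
  · rintro ⟨M, rfl⟩ _ ⟨u, rfl⟩
    exact ⟨u ᵥ* M, vecMul_vecMul u M B⟩

theorem exists_eq_mul_iff_of_mul_eq_one [DecidableEq l] [Fintype n] {A : Matrix m n R}
    {B : Matrix l n R} {H : Matrix n l R} (hBH : B * H = 1) :
    (∃ M : Matrix m l R, A = M * B) ↔ A = A * H * B := by
  constructor
  · rintro ⟨M, rfl⟩
    rw [Matrix.mul_assoc M B H, hBH, Matrix.mul_one]
  · exact fun h => ⟨A * H, h⟩

theorem range_vecMul_subset_range_vecMul_iff_of_mul_eq_one [Fintype m] [DecidableEq m]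
    [DecidableEq l] [Fintype n] {A : Matrix m n R} {B : Matrix l n R} {H : Matrix n l R}
    (hBH : B * H = 1) :
    Set.range (· ᵥ* A) ⊆ Set.range (· ᵥ* B) ↔ A = A * H * B := by
  rw [range_vecMul_subset_range_vecMul_iff, exists_eq_mul_iff_of_mul_eq_one hBH]

theorem range_vecMul_map_subset_iff [Fintype m] [DecidableEq m] [DecidableEq l] [Fintype n]
    {S : Type*} [Semiring S] {f : R →+* S} (hf : Function.Injective f) {A : Matrix m n R}
    {B : Matrix l n R} {H : Matrix n l R} (hBH : B * H = 1) :
    Set.range (· ᵥ* A.map f) ⊆ Set.range (· ᵥ* B.map f) ↔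
      Set.range (· ᵥ* A) ⊆ Set.range (· ᵥ* B) := by
  have hBH_map : B.map f * H.map f = 1 := by
    rw [← Matrix.map_mul, hBH, Matrix.map_one f f.map_zero f.map_one]
  rw [range_vecMul_subset_range_vecMul_iff_of_mul_eq_one hBH_map,
    range_vecMul_subset_range_vecMul_iff_of_mul_eq_one hBH, ← Matrix.map_mul, ← Matrix.map_mul,
    (map_injective hf).eq_iff]

theorem setOf_exists_eq_vecMul (A : Matrix l n R) :
    {v | ∃ u : l → R, v = u ᵥ* A} = Set.range (· ᵥ* A) := by
  simp only [Set.range, eq_comm]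

end Matrix

theorem code_determined_by_polynomial_part_general
    {F : Type*} [Field F] {k n : ℕ}
    (G G' : Matrix (Fin k) (Fin n) (Polynomial F))
    (hG : ∃ H : Matrix (Fin n) (Fin k) (Polynomial F), G * H = 1)
    (hG' : ∃ H : Matrix (Fin n) (Fin k) (Polynomial F), G' * H = 1) :
    ({v : Fin n → LaurentSeries F |
        ∃ u : Fin k → LaurentSeries F, v = Matrix.vecMul u (G.map (polyToLaurent F))} =
      {v : Fin n → LaurentSeries F |
        ∃ u : Fin k → LaurentSeries F, v = Matrix.vecMul u (G'.map (polyToLaurent F))}) ↔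
    ({v : Fin n → Polynomial F | ∃ u : Fin k → Polynomial F, v = Matrix.vecMul u G} =
      {v : Fin n → Polynomial F | ∃ u : Fin k → Polynomial F, v = Matrix.vecMul u G'}) := by
  obtain ⟨H, hH⟩ := hG
  obtain ⟨H', hH'⟩ := hG'
  have hinj := polyToLaurent_injective F
  simp only [setOf_exists_eq_vecMul, Set.Subset.antisymm_iff]
  rw [range_vecMul_map_subset_iff hinj hH', range_vecMul_map_subset_iff hinj hH]

/-- **A convolutional code is uniquely determined by its polynomial part.**
Let `F` be a finite field, `F((z))` the field of formal Laurent series over `F`, and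
let `G, G' ∈ F[z]^{k×n}` both have polynomial right inverses.  Then
`{ uG : u ∈ F((z))^k } = { uG' : u ∈ F((z))^k }` if and only if
`{ uG : u ∈ F[z]^k } = { uG' : u ∈ F[z]^k }`. -/
theorem code_determined_by_polynomial_part
    {F : Type*} [Field F] [Fintype F] {k n : ℕ}
    (G G' : Matrix (Fin k) (Fin n) (Polynomial F))
    (hG : ∃ H : Matrix (Fin n) (Fin k) (Polynomial F), G * H = 1)
    (hG' : ∃ H : Matrix (Fin n) (Fin k) (Polynomial F), G' * H = 1) :
    ({v : Fin n → LaurentSeries F |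
        ∃ u : Fin k → LaurentSeries F, v = Matrix.vecMul u (G.map (polyToLaurent F))} =
      {v : Fin n → LaurentSeries F |
        ∃ u : Fin k → LaurentSeries F, v = Matrix.vecMul u (G'.map (polyToLaurent F))}) ↔
    ({v : Fin n → Polynomial F | ∃ u : Fin k → Polynomial F, v = Matrix.vecMul u G} =
      {v : Fin n → Polynomial F | ∃ u : Fin k → Polynomial F, v = Matrix.vecMul u G'}) :=
  code_determined_by_polynomial_part_general G G' hG hG'
end

section
/- The matrix G = [[2+3z, 3z, 4+4z], [4+2z, 1+3z, 2z]] over F_5[z] is right invertible (it has a polynomial right inverse), its complexity, i.e., the maximal degree of its 2×2 minors, equals 2, and the free distance of the convolutional code it generates equals 5: wt(uG) ≥ 5 for every nonzero u ∈ F_5[z]^2, and equality is attained. Since S(3,2,2) = (3-2)(⌊2/2⌋+1)+2+1 = 5, this code is a (3,2,2;1)_5 MDS convolutional code. -/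
open Polynomial Matrix

/-- The weight of a vector of polynomials: the total number of nonzero coefficients
occurring in its polynomial entries. -/
instance : Fact (Nat.Prime 5) := ⟨by norm_num⟩

/-! Write `G = G₀ + z G₁` with `G₀, G₁` over `F₅`, so that the coefficient of `zⁱ` in `uG` is
`uᵢ G₀ + uᵢ₋₁ G₁`. If `u_a` and `u_b` are the first and last nonzero coefficient vectors of `u`,
then `uG` has coefficients `u_a G₀`, `u_{a+1} G₀ + u_a G₁` and `u_b G₁` at `zᵃ`, `zᵃ⁺¹`, `zᵇ⁺¹`.
For `a < b` these are three distinct positions, and finite checks over `F₅²` bound their weights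
below by `3 + 2`; for `a = b` the first two already carry weight `≥ 5`. The weight-5 word is the
first row of `G`. Each `2×2` minor of `G` is `det (z A + B)` for `2×2` submatrices `A` of `G₁` and
`B` of `G₀`, so it has degree at most `2` and `z²`-coefficient `det A`, nonzero for the first two
columns. -/

namespace Polynomial

variable {R : Type*} [Semiring R] {ι κ : Type*}

def coeffVec (u : ι → R[X]) (i : ℕ) : ι → R := fun r => (u r).coeff i

@[simp]
lemma coeffVec_apply (u : ι → R[X]) (i : ℕ) (r : ι) : coeffVec u i r = (u r).coeff i := rfl

lemma coeffVec_C_comp_zero (a : ι → R) : coeffVec (C ∘ a) 0 = a := by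
  ext; simp

lemma coeffVec_C_comp_succ (a : ι → R) (i : ℕ) : coeffVec (C ∘ a) (i + 1) = 0 := by
  ext; simp

lemma coeffVec_vecMul_zero [Fintype ι] (u : ι → R[X]) (G₀ G₁ : Matrix ι κ R) :
    coeffVec (vecMul u ((X : R[X]) • G₁.map C + G₀.map C)) 0 = vecMul (coeffVec u 0) G₀ := by
  ext j
  simp [vecMul, dotProduct, mul_add, ← mul_assoc]

lemma coeffVec_vecMul_succ [Fintype ι] (u : ι → R[X]) (G₀ G₁ : Matrix ι κ R) (i : ℕ) :
    coeffVec (vecMul u ((X : R[X]) • G₁.map C + G₀.map C)) (i + 1) =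
      vecMul (coeffVec u (i + 1)) G₀ + vecMul (coeffVec u i) G₁ := by
  ext j
  simp [vecMul, dotProduct, mul_add, ← mul_assoc, Finset.sum_add_distrib, add_comm]

end Polynomial

section Weight

variable {F : Type*} [Field F] [DecidableEq F] {n : ℕ}

lemma sum_hammingNorm_coeffVec (v : Fin n → F[X]) (S : Finset ℕ) :
    ∑ i ∈ S, hammingNorm (coeffVec v i) = ∑ j, (S ∩ (v j).support).card := by
  simp only [hammingNorm, Finset.card_filter, ← Finset.filter_mem_eq_inter, mem_support_iff]
  exact Finset.sum_comm

lemma sum_hammingNorm_coeffVec_le_polyWt (v : Fin n → F[X]) (S : Finset ℕ) :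
    ∑ i ∈ S, hammingNorm (coeffVec v i) ≤ polyWt v := by
  rw [sum_hammingNorm_coeffVec]
  exact Finset.sum_le_sum fun j _ => Finset.card_le_card Finset.inter_subset_right

lemma polyWt_eq_sum_hammingNorm_coeffVec (v : Fin n → F[X]) (S : Finset ℕ)
    (hS : ∀ j, (v j).support ⊆ S) : polyWt v = ∑ i ∈ S, hammingNorm (coeffVec v i) := by
  rw [sum_hammingNorm_coeffVec]
  exact Finset.sum_congr rfl fun j _ => by rw [Finset.inter_eq_right.mpr (hS j)]

variable {ι : Type*} [Fintype ι]

lemma polyWt_vecMul_C_comp (a : ι → F) (G₀ G₁ : Matrix ι (Fin n) F) :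
    polyWt (vecMul (C ∘ a) ((X : F[X]) • G₁.map C + G₀.map C)) =
      hammingNorm (vecMul a G₀) + hammingNorm (vecMul a G₁) := by
  set v := vecMul (C ∘ a) ((X : F[X]) • G₁.map C + G₀.map C)
  have hv : ∀ j, (v j).support ⊆ Finset.range 2 := by
    intro j i hi
    by_contra hi₂
    obtain ⟨k, rfl⟩ : ∃ k, i = k + 2 := ⟨i - 2, by rw [Finset.mem_range] at hi₂; omega⟩
    have := congrFun (coeffVec_vecMul_succ (C ∘ a) G₀ G₁ (k + 1)) j
    simp only [coeffVec_C_comp_succ, zero_vecMul, add_zero, coeffVec_apply] at this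
    exact mem_support_iff.mp hi this
  rw [polyWt_eq_sum_hammingNorm_coeffVec v _ hv, Finset.sum_range_succ, Finset.sum_range_one,
    coeffVec_vecMul_zero, coeffVec_vecMul_succ, coeffVec_C_comp_zero, coeffVec_C_comp_succ,
    zero_vecMul, zero_add]

theorem le_polyWt_vecMul_X_smul_add (G₀ G₁ : Matrix ι (Fin n) F) {d d₁ d₂ : ℕ}
    (h_single : ∀ a : ι → F, a ≠ 0 → d ≤ hammingNorm (vecMul a G₀) + hammingNorm (vecMul a G₁))
    (h_start : ∀ a : ι → F, a ≠ 0 → ∀ b,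
      d₁ ≤ hammingNorm (vecMul a G₀) + hammingNorm (vecMul b G₀ + vecMul a G₁))
    (h_end : ∀ a : ι → F, a ≠ 0 → d₂ ≤ hammingNorm (vecMul a G₁)) (hd : d ≤ d₁ + d₂)
    {u : ι → F[X]} (hu : u ≠ 0) :
    d ≤ polyWt (vecMul u ((X : F[X]) • G₁.map C + G₀.map C)) := by
  set v := vecMul u ((X : F[X]) • G₁.map C + G₀.map C)
  set S := Finset.univ.biUnion fun r => (u r).support
  have mem_S : ∀ i, i ∈ S ↔ coeffVec u i ≠ 0 := by
    simp [S, funext_iff]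
  have hS : S.Nonempty := by
    obtain ⟨r, hr⟩ := Function.ne_iff.mp hu
    obtain ⟨i, hi⟩ := nonempty_support_iff.mpr hr
    exact ⟨i, Finset.mem_biUnion.mpr ⟨r, Finset.mem_univ r, hi⟩⟩
  set i₀ := S.min' hS
  set m := S.max' hS
  have h_i₀ : coeffVec u i₀ ≠ 0 := (mem_S _).1 (S.min'_mem hS)
  have h_m : coeffVec u m ≠ 0 := (mem_S _).1 (S.max'_mem hS)
  have h_below : ∀ i < i₀, coeffVec u i = 0 := fun i hi =>
    not_not.1 fun h => (S.min'_le i ((mem_S i).2 h)).not_gt hi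
  have h_above : ∀ i, m < i → coeffVec u i = 0 := fun i hi =>
    not_not.1 fun h => (S.le_max' i ((mem_S i).2 h)).not_gt hi
  have slice_first : coeffVec v i₀ = vecMul (coeffVec u i₀) G₀ := by
    cases hi : i₀ with
    | zero => exact coeffVec_vecMul_zero u G₀ G₁
    | succ i => rw [coeffVec_vecMul_succ, h_below i (by omega), zero_vecMul, add_zero]
  have slice_last : coeffVec v (m + 1) = vecMul (coeffVec u m) G₁ := by
    rw [coeffVec_vecMul_succ, h_above (m + 1) (by omega), zero_vecMul, zero_add]
  rcases (show i₀ ≤ m from S.min'_le_max' hS).eq_or_lt with h_eq | h_lt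
  · calc d ≤ hammingNorm (vecMul (coeffVec u i₀) G₀) + hammingNorm (vecMul (coeffVec u i₀) G₁) :=
          h_single _ h_i₀
      _ = ∑ i ∈ {i₀, i₀ + 1}, hammingNorm (coeffVec v i) := by
          rw [Finset.sum_pair (by omega), slice_first, h_eq, slice_last]
      _ ≤ polyWt v := sum_hammingNorm_coeffVec_le_polyWt v _
  · calc d ≤ d₁ + d₂ := hd
      _ ≤ hammingNorm (vecMul (coeffVec u i₀) G₀) + hammingNorm (coeffVec v (i₀ + 1)) +
            hammingNorm (vecMul (coeffVec u m) G₁) := by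
          rw [coeffVec_vecMul_succ]
          exact add_le_add (h_start _ h_i₀ _) (h_end _ h_m)
      _ = ∑ i ∈ {i₀, i₀ + 1, m + 1}, hammingNorm (coeffVec v i) := by
          rw [Finset.sum_insert (by rw [Finset.mem_insert, Finset.mem_singleton]; omega),
            Finset.sum_pair (by omega), slice_first, slice_last, add_assoc]
      _ ≤ polyWt v := sum_hammingNorm_coeffVec_le_polyWt v _

end Weight

lemma sup_natDegree_det_submatrix_X_smul_add {R : Type*} [CommRing R] {k n : ℕ}
    (A B : Matrix (Fin k) (Fin n) R) (f₀ : Fin k ↪ Fin n) (h : (A.submatrix id f₀).det ≠ 0) :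
    (Finset.univ.sup fun f : Fin k ↪ Fin n =>
      ((((X : R[X]) • A.map C + B.map C).submatrix id ⇑f).det).natDegree) = k := by
  have h_sub : ∀ f : Fin k ↪ Fin n, ((X : R[X]) • A.map C + B.map C).submatrix id ⇑f =
      (X : R[X]) • (A.submatrix id f).map C + (B.submatrix id f).map C := fun f => rfl
  refine le_antisymm (Finset.sup_le fun f _ => ?_)
    (le_trans ?_ (Finset.le_sup (Finset.mem_univ f₀)))
  · simpa [h_sub] using natDegree_det_X_add_C_le (A.submatrix id f) (B.submatrix id f)
  · refine le_natDegree_of_ne_zero ?_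
    simpa [h_sub] using (coeff_det_X_add_C_card (A.submatrix id f₀) (B.submatrix id f₀)).trans_ne h

def G₀ : Matrix (Fin 2) (Fin 3) (ZMod 5) := !![2, 0, 4; 4, 1, 0]
def G₁ : Matrix (Fin 2) (Fin 3) (ZMod 5) := !![3, 3, 4; 2, 3, 2]

/-- The matrix `G = [[2+3z, 3z, 4+4z], [4+2z, 1+3z, 2z]]` over `F₅[z]` is right
invertible, its complexity (the maximal degree of its `2×2` minors) equals `2`, and
the free distance of the convolutional code it generates equals `5`:
`wt(uG) ≥ 5` for every nonzero `u ∈ F₅[z]²` and equality is attained.  Since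
`S(3,2,2) = (3-2)(⌊2/2⌋+1)+2+1 = 5`, this is a `(3,2,2;1)₅` MDS convolutional code. -/
theorem example_32215_mds_code
    (G : Matrix (Fin 2) (Fin 3) (Polynomial (ZMod 5)))
    (hG : G = !![2 + 3 * X, 3 * X, 4 + 4 * X; 4 + 2 * X, 1 + 3 * X, 2 * X]) :
    (∃ H : Matrix (Fin 3) (Fin 2) (Polynomial (ZMod 5)), G * H = 1) ∧
    (Finset.univ.sup fun f : Fin 2 ↪ Fin 3 =>
      ((G.submatrix id ⇑f).det).natDegree) = 2 ∧
    IsLeast {w : ℕ | ∃ u : Fin 2 → Polynomial (ZMod 5),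
      u ≠ 0 ∧ w = polyWt (Matrix.vecMul u G)} 5 ∧
    ((3 - 2) * (2 / 2 + 1) + 2 + 1 : ℕ) = 5 := by
  have hG' : G = (X : (ZMod 5)[X]) • G₁.map C + G₀.map C := by
    subst hG
    refine Matrix.ext fun i j => ?_
    fin_cases i <;> fin_cases j <;> simp [G₀, G₁, map_ofNat] <;> ring
  refine ⟨?_, ?_, ⟨?_, ?_⟩, by norm_num⟩
  · refine ⟨!![1 + 4 * X, 3; 1 + 2 * X, 4; 1 + 3 * X, 1], ?_⟩
    rw [hG, one_fin_two]
    refine Matrix.ext fun i j => ?_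
    fin_cases i <;> fin_cases j <;>
      · simp only [Matrix.mul_apply, Fin.sum_univ_three, of_apply, cons_val', cons_val_fin_one,
          cons_val_zero, cons_val_one, cons_val, Fin.isValue, Fin.zero_eta, Fin.mk_one]
        ring_nf
        reduce_mod_char
  · rw [hG']
    exact sup_natDegree_det_submatrix_X_smul_add G₁ G₀ ⟨![0, 1], by decide⟩
      (by simp [G₁, Matrix.det_fin_two]; decide)
  · refine ⟨C ∘ ![1, 0], fun h => by simpa using congrFun h 0, ?_⟩
    rw [hG', polyWt_vecMul_C_comp]
    decide
  · rintro w ⟨u, hu, rfl⟩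
    rw [hG']
    refine le_polyWt_vecMul_X_smul_add G₀ G₁ (d₁ := 3) (d₂ := 2) ?_ ?_ ?_ le_rfl hu <;> decide
end

section
/- The matrix G_1 = [[1, z, 1+z, 1+z, 1, z, 0], [z, 1+z, 0, 1+z, 1, 1, z], [0, z, 1, 0, 1+z, 1+z, 1+z]] over F_2[z] is right invertible (it has a polynomial right inverse), its complexity, i.e., the maximal degree of its 3×3 minors, equals 3, and the free distance of the convolutional code it generates equals 8: wt(uG_1) ≥ 8 for every nonzero u ∈ F_2[z]^3, and equality is attained. Thus this (7,3,3;1)_2 code meets the Griesmer bound G_2(7,3,3;1) = 8 for convolutional codes. -/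
open Polynomial Matrix

/- ### Auxiliary material -/

lemma pchar2 : (2 : Polynomial (ZMod 2)) = 0 := CharTwo.two_eq_zero
lemma pchar3 : (3 : Polynomial (ZMod 2)) = 1 := by
  rw [show (3:Polynomial (ZMod 2)) = 2 + 1 by norm_num, pchar2, zero_add]
lemma pchar4 : (4 : Polynomial (ZMod 2)) = 0 := by
  rw [show (4:Polynomial (ZMod 2)) = 2 * 2 by norm_num, pchar2, mul_zero]
lemma pchar5 : (5 : Polynomial (ZMod 2)) = 1 := by
  rw [show (5:Polynomial (ZMod 2)) = 4 + 1 by norm_num, pchar4, zero_add]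
lemma pchar6 : (6 : Polynomial (ZMod 2)) = 0 := by
  rw [show (6:Polynomial (ZMod 2)) = 4 + 2 by norm_num, pchar4, pchar2, add_zero]

lemma consval5 {α : Type*} (x : α) (u : Fin 6 → α) : Matrix.vecCons x u 5 = u 4 := rfl
lemma consval6 {α : Type*} (x : α) (u : Fin 6 → α) : Matrix.vecCons x u 6 = u 5 := rfl
lemma consval5' {α : Type*} (x : α) (u : Fin 5 → α) : Matrix.vecCons x u 5 = u 4 := rfl

/-- The generator matrix. -/
noncomputable def Gmat : Matrix (Fin 3) (Fin 7) (Polynomial (ZMod 2)) :=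
      !![1, X, 1 + X, 1 + X, 1, X, 0;
         X, 1 + X, 0, 1 + X, 1, 1, X;
         0, X, 1, 0, 1 + X, 1 + X, 1 + X]

/-- A right inverse. -/
noncomputable def Hmat : Matrix (Fin 7) (Fin 3) (Polynomial (ZMod 2)) :=
  !![1+X^2, X, X+X^2;
     X, 1, 1+X;
     X^2, X, 1+X+X^2;
     X^2, X, 1+X+X^2;
     0, 0, 0;
     0, 0, 0;
     0, 0, 0]

/-- constant coefficient matrix of `Gmat` -/
def Ga : Matrix (Fin 3) (Fin 7) (ZMod 2) :=
  !![1,0,1,1,1,0,0; 0,1,0,1,1,1,0; 0,0,1,0,1,1,1]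
/-- degree-one coefficient matrix of `Gmat` -/
def Gb : Matrix (Fin 3) (Fin 7) (ZMod 2) :=
  !![0,1,1,1,0,1,0; 1,1,0,1,0,0,1; 0,1,0,0,1,1,1]

lemma Gmat_eq : Gmat = (X : Polynomial (ZMod 2)) • Gb.map C + Ga.map C := by
  apply Matrix.ext
  intro i j
  fin_cases i <;> fin_cases j <;>
    · simp [Gmat, Ga, Gb, Matrix.map_apply, consval5, consval6, consval5',
        Matrix.vecHead, Matrix.vecTail]
      try ring

lemma Gmat_entry (i : Fin 3) (j : Fin 7) :
    Gmat i j = X * C (Gb i j) + C (Ga i j) := by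
  rw [Gmat_eq]
  simp [Matrix.map_apply, smul_eq_mul]

lemma Gmat_mul_Hmat : Gmat * Hmat = 1 := by
  apply Matrix.ext
  intro i j
  fin_cases i <;> fin_cases j <;>
    · simp [Gmat, Hmat, Matrix.mul_apply, Fin.sum_univ_succ, Matrix.one_apply,
        Matrix.vecHead, Matrix.vecTail]
      try ring_nf
      try simp only [pchar2, pchar3, pchar4, pchar5, pchar6, mul_zero, zero_mul,
        mul_one, one_mul, add_zero, zero_add]
      try ring

lemma Gmat_complexity : (Finset.univ.sup fun f : Fin 3 ↪ Fin 7 =>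
      ((Gmat.submatrix id ⇑f).det).natDegree) = 3 := by
  apply le_antisymm
  · apply Finset.sup_le
    intro f _
    have h : Gmat.submatrix id ⇑f =
        (X : Polynomial (ZMod 2)) • (Gb.submatrix id ⇑f).map C
          + (Ga.submatrix id ⇑f).map C := by
      rw [Gmat_eq]
      ext i j
      simp [Matrix.submatrix, Matrix.map_apply]
    rw [h]
    simpa using Polynomial.natDegree_det_X_add_C_le
      (Gb.submatrix id ⇑f) (Ga.submatrix id ⇑f)
  · have hf := Finset.le_sup
      (f := fun f : Fin 3 ↪ Fin 7 => ((Gmat.submatrix id ⇑f).det).natDegree)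
      (Finset.mem_univ (Fin.castLEEmb (show 3 ≤ 7 by norm_num)))
    refine le_trans ?_ hf
    show 3 ≤ ((Gmat.submatrix id ⇑(Fin.castLEEmb (show 3 ≤ 7 by norm_num))).det).natDegree
    have hsub : Gmat.submatrix id ⇑(Fin.castLEEmb (show 3 ≤ 7 by norm_num))
        = !![1, X, 1 + X; X, 1 + X, 0; 0, X, 1] := by
      apply Matrix.ext
      intro i j
      fin_cases i <;> fin_cases j <;> rfl
    have hd : (Gmat.submatrix id ⇑(Fin.castLEEmb (show 3 ≤ 7 by norm_num))).det
        = 1 + X + X^3 := by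
      rw [hsub, Matrix.det_fin_three]
      simp [Matrix.vecHead, Matrix.vecTail]
      try ring_nf
      try simp only [pchar2, pchar3, pchar4, pchar5, pchar6, mul_zero, zero_mul,
        mul_one, one_mul, add_zero, zero_add]
      try ring
    rw [hd]
    have h3 : ((1 + X + X^3 : Polynomial (ZMod 2))).natDegree = 3 := by compute_degree!
    omega

/-! ### The free distance lower bound -/

/-- weight of one time-step output of the convolutional encoder -/
def stepW (s a : Fin 3 → ZMod 2) : ℕ :=
  (Finset.univ.filter fun j : Fin 7 =>
    (∑ i, a i * Ga i j) + (∑ i, s i * Gb i j) ≠ 0).card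

/-- potential function (distance-from-origin profile) -/
def gPot (s : Fin 3 → ZMod 2) : ℕ := if s = 0 then 8 else 4

lemma stepW_first : ∀ a : Fin 3 → ZMod 2, a ≠ 0 → 4 ≤ stepW 0 a := by decide
lemma stepW_flush : ∀ s : Fin 3 → ZMod 2, s ≠ 0 → 4 ≤ stepW s 0 := by decide

lemma gPot_le_eight (s : Fin 3 → ZMod 2) : gPot s ≤ 8 := by
  unfold gPot; split <;> omega

lemma four_le_gPot (s : Fin 3 → ZMod 2) : 4 ≤ gPot s := by
  unfold gPot; split <;> omega

/-- Main combinatorial induction over the trellis. -/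
lemma seq_bound (a : ℕ → Fin 3 → ZMod 2) :
    ∀ n : ℕ, (∀ t, t < n → a t = 0) ∨
      gPot (if n = 0 then 0 else a (n-1)) ≤
        ∑ k ∈ Finset.range n, stepW (if k = 0 then 0 else a (k-1)) (a k) := by
  intro n
  induction n with
  | zero => exact Or.inl (fun t ht => absurd ht (Nat.not_lt_zero t))
  | succ n ih =>
    have hsum : ∑ k ∈ Finset.range (n+1), stepW (if k = 0 then 0 else a (k-1)) (a k)
        = (∑ k ∈ Finset.range n, stepW (if k = 0 then 0 else a (k-1)) (a k))
          + stepW (if n = 0 then 0 else a (n-1)) (a n) := Finset.sum_range_succ _ _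
    have hne : (n+1 : ℕ) ≠ 0 := Nat.succ_ne_zero n
    have hred : (if n+1 = 0 then (0 : Fin 3 → ZMod 2) else a ((n+1)-1)) = a n := by
      simp
    rcases ih with h0 | hg
    · -- everything so far is zero
      have hpn : (if n = 0 then (0 : Fin 3 → ZMod 2) else a (n-1)) = 0 := by
        rcases Nat.eq_zero_or_pos n with h | h
        · simp [h]
        · have : n - 1 < n := by omega
          simp [Nat.pos_iff_ne_zero.mp h, h0 (n-1) this]
      by_cases ha : a n = 0
      · refine Or.inl (fun t ht => ?_)
        rcases Nat.lt_succ_iff_lt_or_eq.mp ht with h | h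
        · exact h0 t h
        · rw [h]; exact ha
      · refine Or.inr ?_
        rw [hred, hsum, hpn]
        have h1 : gPot (a n) = 4 := by unfold gPot; simp [ha]
        have h2 := stepW_first (a n) ha
        omega
    · -- already accumulated at least the potential
      refine Or.inr ?_
      rw [hred, hsum]
      set s := (if n = 0 then (0 : Fin 3 → ZMod 2) else a (n-1)) with hs
      by_cases hps : s = 0
      · have := gPot_le_eight (a n)
        have h8 : gPot s = 8 := by unfold gPot; simp [hps]
        omega
      · by_cases ha : a n = 0
        · rw [ha]
          have h2 : gPot s = 4 := by unfold gPot; simp [hps]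
          have h3 := stepW_flush s hps
          have h8 : gPot (0 : Fin 3 → ZMod 2) = 8 := by unfold gPot; simp
          omega
        · have h1 : gPot (a n) = 4 := by unfold gPot; simp [ha]
          have := four_le_gPot s
          omega

lemma seq_final (a : ℕ → Fin 3 → ZMod 2) (N : ℕ) (hN : a N = 0)
    (t : ℕ) (ht : t ≤ N) (hat : a t ≠ 0) :
    8 ≤ ∑ k ∈ Finset.range (N+1), stepW (if k = 0 then 0 else a (k-1)) (a k) := by
  rcases seq_bound a (N+1) with h | h
  · exact absurd (h t (Nat.lt_succ_of_le ht)) hat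
  · have : (if N+1 = 0 then (0 : Fin 3 → ZMod 2) else a ((N+1)-1)) = 0 := by simpa using hN
    rw [this] at h
    have h8 : gPot 0 = 8 := by unfold gPot; simp
    omega

/-- The free-distance lower bound. -/
lemma dist_lower (u : Fin 3 → Polynomial (ZMod 2)) (hu : u ≠ 0) :
    8 ≤ polyWt (Matrix.vecMul u Gmat) := by
  classical
  -- coefficient sequences
  set a : ℕ → Fin 3 → ZMod 2 := fun k i => (u i).coeff k with ha
  set p : ℕ → Fin 3 → ZMod 2 := fun k => if k = 0 then 0 else a (k-1) with hp
  -- entrywise coefficient formula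
  have hvm : ∀ j : Fin 7, Matrix.vecMul u Gmat j = ∑ i, u i * Gmat i j := by
    intro j
    simp [Matrix.vecMul, dotProduct]
  have coeffc : ∀ (j : Fin 7) (k : ℕ),
      (Matrix.vecMul u Gmat j).coeff k
        = (∑ i, a k i * Ga i j) + (∑ i, p k i * Gb i j) := by
    intro j k
    rw [hvm j, Polynomial.finset_sum_coeff]
    have hterm : ∀ i : Fin 3, (u i * Gmat i j).coeff k
        = a k i * Ga i j + p k i * Gb i j := by
      intro i
      rw [Gmat_entry, mul_add, Polynomial.coeff_add]
      have h1 : (u i * C (Ga i j)).coeff k = a k i * Ga i j := by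
        rw [Polynomial.coeff_mul_C]
      have h2 : (u i * (X * C (Gb i j))).coeff k = p k i * Gb i j := by
        rw [show u i * (X * C (Gb i j)) = (u i * X) * C (Gb i j) by ring,
          Polynomial.coeff_mul_C]
        cases k with
        | zero =>
          simp [hp, Polynomial.mul_coeff_zero]
        | succ m =>
          rw [Polynomial.coeff_mul_X]
          simp [hp, ha]
      rw [h1, h2]
      ring
    rw [Finset.sum_congr rfl (fun i _ => hterm i), Finset.sum_add_distrib]
  -- the degree horizon
  set N : ℕ := (u 0).natDegree + (u 1).natDegree + (u 2).natDegree + 1 with hN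
  have haN : ∀ k, N ≤ k → a k = 0 := by
    intro k hk
    funext i
    have : (u i).natDegree < k := by
      fin_cases i <;> simp <;> omega
    simpa [ha] using Polynomial.coeff_eq_zero_of_natDegree_lt this
  -- a nonzero coefficient exists
  obtain ⟨i, hi⟩ := Function.ne_iff.mp hu
  have hui : u i ≠ 0 := by simpa using hi
  have hlt : (u i).natDegree ≤ N := by
    fin_cases i <;> simp <;> omega
  have hat : a ((u i).natDegree) ≠ 0 := by
    intro h
    have := congrFun h i
    simp only [ha, Pi.zero_apply] at this
    exact (Polynomial.leadingCoeff_ne_zero.mpr hui) this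
  -- cardinality per time step
  have hcards : ∀ k : ℕ,
      (Finset.univ.filter fun j : Fin 7 => (Matrix.vecMul u Gmat j).coeff k ≠ 0).card
        = stepW (p k) (a k) := by
    intro k
    unfold stepW
    apply Finset.card_bij (fun x _ => x)
    · intro x hx
      simp only [Finset.mem_filter, Finset.mem_univ, true_and] at hx ⊢
      rwa [coeffc] at hx
    · intro x y _ _ h; exact h
    · intro x hx
      refine ⟨x, ?_, rfl⟩
      simp only [Finset.mem_filter, Finset.mem_univ, true_and] at hx ⊢
      rwa [coeffc]
  -- weight chain
  have hchain : ∑ k ∈ Finset.range (N+1), stepW (p k) (a k)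
      ≤ polyWt (Matrix.vecMul u Gmat) := by
    have step1 : ∀ j : Fin 7,
        ((Finset.range (N+1)).filter fun k => (Matrix.vecMul u Gmat j).coeff k ≠ 0).card
          ≤ (Matrix.vecMul u Gmat j).support.card := by
      intro j
      apply Finset.card_le_card
      intro k hk
      simp only [Finset.mem_filter] at hk
      exact Polynomial.mem_support_iff.mpr hk.2
    calc ∑ k ∈ Finset.range (N+1), stepW (p k) (a k)
        = ∑ k ∈ Finset.range (N+1),
            (Finset.univ.filter fun j : Fin 7 =>
              (Matrix.vecMul u Gmat j).coeff k ≠ 0).card := by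
          exact (Finset.sum_congr rfl (fun k _ => (hcards k).symm))
      _ = ∑ k ∈ Finset.range (N+1), ∑ j : Fin 7,
            (if (Matrix.vecMul u Gmat j).coeff k ≠ 0 then 1 else 0) := by
          refine Finset.sum_congr rfl (fun k _ => ?_)
          rw [Finset.card_filter]
      _ = ∑ j : Fin 7, ∑ k ∈ Finset.range (N+1),
            (if (Matrix.vecMul u Gmat j).coeff k ≠ 0 then 1 else 0) :=
          Finset.sum_comm
      _ = ∑ j : Fin 7,
            ((Finset.range (N+1)).filter fun k =>
              (Matrix.vecMul u Gmat j).coeff k ≠ 0).card := by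
          refine Finset.sum_congr rfl (fun j _ => ?_)
          rw [Finset.card_filter]
      _ ≤ ∑ j : Fin 7, (Matrix.vecMul u Gmat j).support.card :=
          Finset.sum_le_sum (fun j _ => step1 j)
      _ = polyWt (Matrix.vecMul u Gmat) := rfl
  have hbound := seq_final a N (haN N le_rfl) ((u i).natDegree) hlt hat
  calc (8:ℕ) ≤ ∑ k ∈ Finset.range (N+1), stepW (if k = 0 then 0 else a (k-1)) (a k) := hbound
    _ = ∑ k ∈ Finset.range (N+1), stepW (p k) (a k) := rfl
    _ ≤ polyWt (Matrix.vecMul u Gmat) := hchain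

lemma supp_card_one_add_X : (1 + X : Polynomial (ZMod 2)).support.card = 2 := by
  have h : (1 + X : Polynomial (ZMod 2)) = C 1 * X ^ 0 + C 1 * X ^ 1 := by simp
  rw [h, Polynomial.support_binomial (by norm_num) one_ne_zero one_ne_zero]
  rfl

/-- The weight 8 is attained, by the first row. -/
lemma dist_attained :
    polyWt (Matrix.vecMul (![1, 0, 0] : Fin 3 → Polynomial (ZMod 2)) Gmat) = 8 := by
  have hvm : ∀ j : Fin 7,
      Matrix.vecMul (![1, 0, 0] : Fin 3 → Polynomial (ZMod 2)) Gmat j = Gmat 0 j := by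
    intro j
    simp [Matrix.vecMul, dotProduct, Fin.sum_univ_three]
  unfold polyWt
  rw [Fin.sum_univ_seven]
  simp only [hvm]
  have h0 : Gmat 0 0 = 1 := rfl
  have h1 : Gmat 0 1 = X := rfl
  have h2 : Gmat 0 2 = 1 + X := rfl
  have h3 : Gmat 0 3 = 1 + X := rfl
  have h4 : Gmat 0 4 = 1 := rfl
  have h5 : Gmat 0 5 = X := rfl
  have h6 : Gmat 0 6 = 0 := rfl
  rw [h0, h1, h2, h3, h4, h5, h6, supp_card_one_add_X]
  have hone : (1 : Polynomial (ZMod 2)).support = {0} := by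
    rw [← Polynomial.C_1]; exact Polynomial.support_C one_ne_zero
  rw [hone, Polynomial.support_X, Polynomial.support_zero]
  rfl

/-- The matrix
`G₁ = [[1, z, 1+z, 1+z, 1, z, 0], [z, 1+z, 0, 1+z, 1, 1, z], [0, z, 1, 0, 1+z, 1+z, 1+z]]`
over `F₂[z]` is right invertible, its complexity (the maximal degree of its `3×3`
minors) equals `3`, and the free distance of the convolutional code it generates
equals `8`: `wt(uG₁) ≥ 8` for every nonzero `u ∈ F₂[z]³` and equality is attained.
Thus this `(7,3,3;1)₂` code meets the Griesmer bound `G₂(7,3,3;1) = 8`. -/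
theorem example_73312_code_meets_griesmer :
    let G : Matrix (Fin 3) (Fin 7) (Polynomial (ZMod 2)) :=
      !![1, X, 1 + X, 1 + X, 1, X, 0;
         X, 1 + X, 0, 1 + X, 1, 1, X;
         0, X, 1, 0, 1 + X, 1 + X, 1 + X]
    (∃ H : Matrix (Fin 7) (Fin 3) (Polynomial (ZMod 2)), G * H = 1) ∧
    (Finset.univ.sup fun f : Fin 3 ↪ Fin 7 =>
      ((G.submatrix id ⇑f).det).natDegree) = 3 ∧
    IsLeast {w : ℕ | ∃ u : Fin 3 → Polynomial (ZMod 2),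
      u ≠ 0 ∧ w = polyWt (Matrix.vecMul u G)} 8 := by
  intro G
  have hG : G = Gmat := rfl
  refine ⟨⟨Hmat, by rw [hG]; exact Gmat_mul_Hmat⟩, by rw [hG]; exact Gmat_complexity, ?_⟩
  constructor
  · refine ⟨![1, 0, 0], ?_, ?_⟩
    · intro h
      have := congrFun h 0
      simp at this
    · rw [hG, dist_attained]
  · rintro w ⟨u, hu, rfl⟩
    rw [hG]
    exact dist_lower u hu
end
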